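/- arXiv:1801.02214 — 13 statements merged into one kernel-verified Lean document; each statement's English description precedes it below -/
import Mathlib

section
/- Let E, Q ∈ ℂ^{n×n} be such that the matrix pencil λE − Q is regular, i.e., det(λ₀E − Q) ≠ 0 for some λ₀ ∈ ℂ. Then EᴴQ = QᴴE if and only if there exist a unitary matrix U ∈ ℂ^{n×n} and an invertible matrix X ∈ ℂ^{n×n} such that UEX and UQX are diagonal matrices with real entries satisfying (UEX)² + (UQX)² = I_n. Moreover, if in addition EᴴQ is positive semidefinite, then U and X can be chosen so that the diagonal matrices UEX and UQX both have nonnegative diagonal entries. -/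
/-
Regularity of the pencil makes `EᴴE + QᴴQ` positive definite, so after replacing `(E, Q)` by
`(ER, QR)` for a suitable invertible `R` we may assume `EᴴE + QᴴQ = 1`. Together with
`EᴴQ = QᴴE` this makes `Z = E + iQ` and `Y = E - iQ` unitary. Diagonalise the unitary matrix
`ZᴴY = W D Wᴴ`. Since `E = (Z + Y)/2` and `Q = (Z - Y)/(2i)`, the matrices `WᴴZᴴEW` and `WᴴZᴴQW`
are `(1 + D)/2` and `-i(1 - D)/2`; scaling the `k`-th row by a unimodular `g` with `g dₖ = conj g`
turns them into `Re g` and `Im g`. Conversely, real diagonal matrices are Hermitian and commute,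
which gives `EᴴQ = QᴴE` back. If `EᴴQ ⪰ 0`, then `Xᴴ(EᴴQ)X = diag(cₖ sₖ) ⪰ 0`, so `cₖ` and `sₖ`
never have opposite signs and a sign change of each row makes both nonnegative.
-/

open Matrix ComplexOrder Complex ComplexConjugate Module.End

theorem Complex.exists_norm_eq_one_mul_eq_conj {d : ℂ} (hd : ‖d‖ = 1) :
    ∃ g : ℂ, ‖g‖ = 1 ∧ g * d = conj g := by
  obtain ⟨g, hg⟩ := IsAlgClosed.exists_pow_nat_eq (conj d) two_pos
  have hg1 : ‖g‖ = 1 := by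
    rwa [← pow_eq_one_iff_of_nonneg (norm_nonneg g) two_ne_zero, ← norm_pow, hg, norm_conj]
  refine ⟨g, hg1, ?_⟩
  rw [← conj_conj d, ← hg, map_pow, sq, ← mul_assoc, mul_conj', hg1]
  simp

theorem exists_sign_mul_eq_abs_of_mul_nonneg {c s : ℝ} (h : 0 ≤ c * s) :
    ∃ τ : ℝ, |τ| = 1 ∧ τ * c = |c| ∧ τ * s = |s| := by
  by_cases hcs : c + s < 0
  · refine ⟨-1, by simp, ?_, ?_⟩
    · rw [abs_of_nonpos (by nlinarith)]; ring
    · rw [abs_of_nonpos (by nlinarith)]; ring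
  · refine ⟨1, by simp, ?_, ?_⟩
    · rw [abs_of_nonneg (by nlinarith)]; ring
    · rw [abs_of_nonneg (by nlinarith)]; ring

namespace Matrix

section

variable {n : Type*} [DecidableEq n]

theorem im_diagonal_ofReal (c : n → ℝ) (i j : n) :
    ((diagonal fun k => (c k : ℂ)) i j).im = 0 := by
  rcases eq_or_ne i j with rfl | hij
  · simp
  · simp [diagonal_apply_ne _ hij]

theorem IsDiag.isHermitian_of_im_eq_zero {A : Matrix n n ℂ} (hA : A.IsDiag)
    (him : ∀ i j, (A i j).im = 0) : A.IsHermitian := by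
  rw [← hA.diagonal_diag]
  exact isHermitian_diagonal_of_self_adjoint _ (funext fun i => conj_eq_iff_im.2 (him i i))

end

variable {n : Type*} [Fintype n] [DecidableEq n]

theorem diagonal_mem_unitaryGroup_iff {d : n → ℂ} :
    diagonal d ∈ unitaryGroup n ℂ ↔ ∀ k, ‖d k‖ = 1 := by
  rw [mem_unitaryGroup_iff', star_eq_conjTranspose, diagonal_conjTranspose,
    diagonal_mul_diagonal, ← diagonal_one, diagonal_eq_diagonal_iff]
  refine forall_congr' fun k => ?_
  rw [Pi.star_apply, star_def, conj_mul', ← ofReal_pow, ofReal_eq_one,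
    pow_eq_one_iff_of_nonneg (norm_nonneg _) two_ne_zero]

theorem conjTranspose_mul_mul_mul_mul_of_mem_unitaryGroup {U : Matrix n n ℂ}
    (hU : U ∈ unitaryGroup n ℂ) (M N X : Matrix n n ℂ) :
    (U * M * X)ᴴ * (U * N * X) = Xᴴ * (Mᴴ * N) * X := by
  have hUU : Uᴴ * U = 1 := Unitary.star_mul_self_of_mem hU
  simp only [conjTranspose_mul, mul_assoc]
  rw [← mul_assoc Uᴴ, hUU, one_mul]

theorem posDef_conjTranspose_mul_self_add_of_det_ne_zero {E Q : Matrix n n ℂ} {μ : ℂ}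
    (hμ : (μ • E - Q).det ≠ 0) : (Eᴴ * E + Qᴴ * Q).PosDef := by
  rw [← fromCols_mul_fromRows, ← conjTranspose_fromRows_eq_fromCols_conjTranspose]
  refine PosDef.conjTranspose_mul_self _ fun x y hxy => ?_
  rw [fromRows_mulVec, fromRows_mulVec, Sum.elim_eq_iff] at hxy
  refine sub_eq_zero.mp (eq_zero_of_mulVec_eq_zero hμ ?_)
  rw [sub_mulVec, smul_mulVec, mulVec_sub, mulVec_sub, hxy.1, hxy.2]
  simp

open scoped MatrixOrder Matrix.Norms.L2Operator in
theorem PosDef.exists_isUnit_conjTranspose_mul_mul_eq_one {𝕜 : Type*} [RCLike 𝕜]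
    {T : Matrix n n 𝕜} (hT : T.PosDef) : ∃ R : Matrix n n 𝕜, IsUnit R ∧ Rᴴ * T * R = 1 := by
  obtain ⟨Y, hY, rfl⟩ :=
    CStarAlgebra.isStrictlyPositive_iff_eq_star_mul_self.mp hT.isStrictlyPositive
  lift Y to (Matrix n n 𝕜)ˣ using hY
  refine ⟨↑Y⁻¹, Units.isUnit _, ?_⟩
  rw [← star_eq_conjTranspose, ← mul_assoc, ← star_mul, mul_assoc, Units.mul_inv, star_one,
    one_mul]

theorem _root_.OrthonormalBasis.conj_toMatrix_eq_diagonal_of_mulVec_eq_smul {𝕜 : Type*}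
    [RCLike 𝕜] (v : OrthonormalBasis n 𝕜 (EuclideanSpace 𝕜 n)) {M : Matrix n n 𝕜} {m : n → 𝕜}
    (hM : ∀ k, M *ᵥ v k = m k • v k) :
    star ((EuclideanSpace.basisFun n 𝕜).toBasis.toMatrix v) * M *
      (EuclideanSpace.basisFun n 𝕜).toBasis.toMatrix v = diagonal m := by
  set W := (EuclideanSpace.basisFun n 𝕜).toBasis.toMatrix v
  have hMW : M * W = W * diagonal m := by
    ext i k
    rw [mul_diagonal, mul_comm]
    exact congrFun (hM k) i
  rw [mul_assoc, hMW, ← mul_assoc, star_eq_conjTranspose,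
    (EuclideanSpace.basisFun n 𝕜).toMatrix_orthonormalBasis_conjTranspose_mul_self, one_mul]

theorem exists_unitary_conj_diagonal_of_commute {𝕜 : Type*} [RCLike 𝕜] {A B : Matrix n n 𝕜}
    (hA : A.IsHermitian) (hB : B.IsHermitian) (hAB : Commute A B) :
    ∃ W ∈ unitaryGroup n 𝕜, ∃ a b : n → 𝕜,
      star W * A * W = diagonal a ∧ star W * B * W = diagonal b := by
  set TA := toEuclideanLin A
  set TB := toEuclideanLin B
  have hTA : TA.IsSymmetric := isSymmetric_toEuclideanLin_iff.2 hA
  have hTB : TB.IsSymmetric := isSymmetric_toEuclideanLin_iff.2 hB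
  have hT : Commute TA TB := LinearMap.ext fun x => by
    ext i
    simp [TA, TB, mulVec_mulVec, hAB.eq]
  have hint₀ := hTA.directSum_isInternal_of_commute hTB hT
  have : Fintype {μ : 𝕜 × 𝕜 // eigenspace TA μ.2 ⊓ eigenspace TB μ.1 ≠ ⊥} :=
    hint₀.submodule_iSupIndep.fintypeNeBotOfFiniteDimensional
  have hint := DirectSum.isInternal_ne_bot_iff.2 hint₀
  have horth := (hTA.orthogonalFamily_eigenspace_inf_eigenspace hTB).comp
    (Subtype.coe_injective (p := fun μ : 𝕜 × 𝕜 => eigenspace TA μ.2 ⊓ eigenspace TB μ.1 ≠ ⊥))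
  have hn : Module.finrank 𝕜 (EuclideanSpace 𝕜 n) = Fintype.card n := finrank_euclideanSpace
  let e := (Fintype.equivFin n).symm
  let v := (hint.subordinateOrthonormalBasis hn horth).reindex e
  let μ k := (hint.subordinateOrthonormalBasisIndex hn (e.symm k) horth).1
  have hv k : v k ∈ eigenspace TA (μ k).2 ⊓ eigenspace TB (μ k).1 := by
    simpa [v, μ] using hint.subordinateOrthonormalBasis_subordinate hn (e.symm k) horth
  refine ⟨_, (EuclideanSpace.basisFun n 𝕜).toMatrix_orthonormalBasis_mem_unitary v,
    fun k => (μ k).2, fun k => (μ k).1, v.conj_toMatrix_eq_diagonal_of_mulVec_eq_smul fun k => ?_,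
    v.conj_toMatrix_eq_diagonal_of_mulVec_eq_smul fun k => ?_⟩
  · simpa [TA, TB] using congr(WithLp.ofLp $(mem_eigenspace_iff.1 (hv k).1))
  · simpa [TA, TB] using congr(WithLp.ofLp $(mem_eigenspace_iff.1 (hv k).2))

theorem exists_unitary_conj_diagonal_of_isStarNormal {V : Matrix n n ℂ} (hV : IsStarNormal V) :
    ∃ W ∈ unitaryGroup n ℂ, ∃ d : n → ℂ, star W * V * W = diagonal d := by
  obtain ⟨W, hW, a, b, ha, hb⟩ := exists_unitary_conj_diagonal_of_commute (realPart V).2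
    (imaginaryPart V).2 (Commute.realPart_imaginaryPart V)
  refine ⟨W, hW, a + I • b, ?_⟩
  conv_lhs => rw [← realPart_add_I_smul_imaginaryPart V]
  rw [mul_add, add_mul, mul_smul_comm, smul_mul_assoc, ha, hb, ← diagonal_smul, diagonal_add]
  rfl

theorem add_I_smul_mem_unitaryGroup {A B : Matrix n n ℂ} (h1 : Aᴴ * A + Bᴴ * B = 1)
    (h2 : Aᴴ * B = Bᴴ * A) : A + I • B ∈ unitaryGroup n ℂ := by
  rw [mem_unitaryGroup_iff', star_eq_conjTranspose, conjTranspose_add, conjTranspose_smul,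
    star_def, conj_I]
  calc (Aᴴ + -I • Bᴴ) * (A + I • B) = Aᴴ * A + Bᴴ * B + I • (Aᴴ * B - Bᴴ * A) := by
        simp only [add_mul, mul_add, smul_mul_assoc, mul_smul_comm]
        match_scalars <;> simp
    _ = 1 := by rw [h1, h2, sub_self, smul_zero, add_zero]

structure IsCosSinForm (E Q U X : Matrix n n ℂ) (c s : n → ℝ) : Prop where
  left : U * E * X = diagonal fun k => (c k : ℂ)
  right : U * Q * X = diagonal fun k => (s k : ℂ)
  sq_add_sq : ∀ k, c k ^ 2 + s k ^ 2 = 1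

theorem exists_isCosSinForm_of_mem_unitaryGroup {Z Y : Matrix n n ℂ} (hZ : Z ∈ unitaryGroup n ℂ)
    (hY : Y ∈ unitaryGroup n ℂ) :
    ∃ U ∈ unitaryGroup n ℂ, ∃ W ∈ unitaryGroup n ℂ, ∃ c s : n → ℝ,
      IsCosSinForm ((1 / 2 : ℂ) • Z + (1 / 2 : ℂ) • Y) ((-I / 2) • Z + (I / 2) • Y) U W c s := by
  have hV : star Z * Y ∈ unitaryGroup n ℂ := mul_mem (Unitary.star_mem hZ) hY
  obtain ⟨W, hW, d, hd⟩ := exists_unitary_conj_diagonal_of_isStarNormal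
    (isStarNormal_of_mem_unitary hV)
  have hd1 : ∀ k, ‖d k‖ = 1 :=
    diagonal_mem_unitaryGroup_iff.1 (hd ▸ mul_mem (mul_mem (Unitary.star_mem hW) hV) hW)
  choose g hg hgd using fun k => exists_norm_eq_one_mul_eq_conj (hd1 k)
  have hU : diagonal g * star W * star Z ∈ unitaryGroup n ℂ :=
    mul_mem (mul_mem (diagonal_mem_unitaryGroup_iff.2 hg) (Unitary.star_mem hW))
      (Unitary.star_mem hZ)
  have key (α β : ℂ) : diagonal g * star W * star Z * (α • Z + β • Y) * W =
      diagonal fun k => g k * (α + β * d k) := by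
    have hZ' : star Z * (α • Z + β • Y) = α • 1 + β • (star Z * Y) := by
      rw [mul_add, mul_smul_comm, mul_smul_comm, Unitary.star_mul_self_of_mem hZ]
    have hW' : star W * (α • 1 + β • (star Z * Y)) * W = diagonal fun k => α + β * d k := by
      rw [mul_add, add_mul, mul_smul_comm, smul_mul_assoc, mul_one,
        Unitary.star_mul_self_of_mem hW, mul_smul_comm, smul_mul_assoc, hd, ← diagonal_one,
        ← diagonal_smul, ← diagonal_smul, diagonal_add]
      simp
    rw [mul_assoc _ (star Z), hZ', mul_assoc, mul_assoc, ← mul_assoc (star W), hW',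
      diagonal_mul_diagonal]
  refine ⟨_, hU, W, hW, fun k => (g k).re, fun k => (g k).im, ?_, ?_, fun k => ?_⟩
  · rw [key]
    congr 1
    funext k
    rw [re_eq_add_conj, ← hgd k]
    ring
  · rw [key]
    congr 1
    funext k
    rw [im_eq_sub_conj, ← hgd k, eq_div_iff (mul_ne_zero two_ne_zero I_ne_zero)]
    ring_nf
    rw [I_sq]
    ring
  · rw [sq, sq, ← normSq_apply, ← Complex.sq_norm, hg k, one_pow]

theorem exists_isCosSinForm_of_conjTranspose_mul_self_add_eq_one {A B : Matrix n n ℂ}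
    (h1 : Aᴴ * A + Bᴴ * B = 1) (h2 : Aᴴ * B = Bᴴ * A) :
    ∃ U ∈ unitaryGroup n ℂ, ∃ W ∈ unitaryGroup n ℂ, ∃ c s : n → ℝ, IsCosSinForm A B U W c s := by
  have hA : A = (1 / 2 : ℂ) • (A + I • B) + (1 / 2 : ℂ) • (A + I • -B) := by module
  have hB : B = (-I / 2) • (A + I • B) + (I / 2) • (A + I • -B) := by
    match_scalars
    · ring_nf
      simp
    · ring
  have := exists_isCosSinForm_of_mem_unitaryGroup (add_I_smul_mem_unitaryGroup h1 h2)
    (add_I_smul_mem_unitaryGroup (B := -B) (by simpa using h1) (by simpa using h2))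
  rwa [← hA, ← hB] at this

theorem exists_isCosSinForm {E Q : Matrix n n ℂ} (hreg : ∃ μ : ℂ, (μ • E - Q).det ≠ 0)
    (hEQ : Eᴴ * Q = Qᴴ * E) :
    ∃ U ∈ unitaryGroup n ℂ, ∃ X, IsUnit X ∧ ∃ c s : n → ℝ, IsCosSinForm E Q U X c s := by
  obtain ⟨μ, hμ⟩ := hreg
  obtain ⟨R, hR, hRT⟩ :=
    (posDef_conjTranspose_mul_self_add_of_det_ne_zero hμ).exists_isUnit_conjTranspose_mul_mul_eq_one
  have h1 : (E * R)ᴴ * (E * R) + (Q * R)ᴴ * (Q * R) = 1 := by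
    rw [← hRT]
    simp only [conjTranspose_mul, mul_add, add_mul, mul_assoc]
  have h2 : (E * R)ᴴ * (Q * R) = (Q * R)ᴴ * (E * R) := by
    simp only [conjTranspose_mul, mul_assoc]
    rw [← mul_assoc Eᴴ, hEQ, mul_assoc]
  obtain ⟨U, hU, W, hW, c, s, h⟩ := exists_isCosSinForm_of_conjTranspose_mul_self_add_eq_one h1 h2
  refine ⟨U, hU, R * W, hR.mul (Unitary.isUnit_coe (U := ⟨W, hW⟩)), c, s, ?_, ?_, h.sq_add_sq⟩
  · rw [← h.left]; simp only [mul_assoc]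
  · rw [← h.right]; simp only [mul_assoc]

namespace IsCosSinForm

variable {E Q U X : Matrix n n ℂ} {c s : n → ℝ}

theorem isDiag_left (h : IsCosSinForm E Q U X c s) : (U * E * X).IsDiag :=
  h.left ▸ isDiag_diagonal _

theorem isDiag_right (h : IsCosSinForm E Q U X c s) : (U * Q * X).IsDiag :=
  h.right ▸ isDiag_diagonal _

theorem im_left (h : IsCosSinForm E Q U X c s) (i j : n) : ((U * E * X) i j).im = 0 :=
  h.left ▸ im_diagonal_ofReal c i j

theorem im_right (h : IsCosSinForm E Q U X c s) (i j : n) : ((U * Q * X) i j).im = 0 :=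
  h.right ▸ im_diagonal_ofReal s i j

theorem sq_add_sq_eq_one (h : IsCosSinForm E Q U X c s) :
    (U * E * X) ^ 2 + (U * Q * X) ^ 2 = 1 := by
  rw [h.left, h.right, diagonal_pow, diagonal_pow, diagonal_add, ← diagonal_one]
  congr 1
  funext k
  simp only [Pi.pow_apply]
  exact_mod_cast h.sq_add_sq k

theorem mul_nonneg_of_posSemidef (h : IsCosSinForm E Q U X c s) (hU : U ∈ unitaryGroup n ℂ)
    (hEQ : (Eᴴ * Q).PosSemidef) (k : n) :
    0 ≤ c k * s k := by
  have hdiag : Xᴴ * (Eᴴ * Q) * X = diagonal fun k => ((c k * s k : ℝ) : ℂ) := by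
    rw [← conjTranspose_mul_mul_mul_mul_of_mem_unitaryGroup hU, h.left, h.right,
      diagonal_conjTranspose, diagonal_mul_diagonal]
    congr 1
    funext k
    simp
  have hk := (hEQ.conjTranspose_mul_mul_same X).diag_nonneg (i := k)
  rwa [hdiag, diagonal_apply_eq, Complex.zero_le_real] at hk

theorem exists_abs (h : IsCosSinForm E Q U X c s) (hU : U ∈ unitaryGroup n ℂ)
    (hcs : ∀ k, 0 ≤ c k * s k) :
    ∃ U' ∈ unitaryGroup n ℂ, IsCosSinForm E Q U' X (fun k => |c k|) (fun k => |s k|) := by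
  choose τ hτ hτc hτs using fun k => exists_sign_mul_eq_abs_of_mul_nonneg (hcs k)
  refine ⟨diagonal (fun k => (τ k : ℂ)) * U,
    mul_mem (diagonal_mem_unitaryGroup_iff.2 fun k => by simpa using hτ k) hU, ?_, ?_, ?_⟩
  · rw [mul_assoc, mul_assoc, ← mul_assoc U, h.left, diagonal_mul_diagonal]
    congr 1
    funext k
    exact_mod_cast hτc k
  · rw [mul_assoc, mul_assoc, ← mul_assoc U, h.right, diagonal_mul_diagonal]
    congr 1
    funext k
    exact_mod_cast hτs k
  · simpa only [sq_abs] using h.sq_add_sq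

end IsCosSinForm

theorem conjTranspose_mul_comm_of_isDiag {E Q U X : Matrix n n ℂ} (hU : U ∈ unitaryGroup n ℂ)
    (hX : IsUnit X) (hE : (U * E * X).IsDiag) (hQ : (U * Q * X).IsDiag)
    (hE' : (U * E * X).IsHermitian) (hQ' : (U * Q * X).IsHermitian) : Eᴴ * Q = Qᴴ * E := by
  have key : Xᴴ * (Eᴴ * Q) * X = Xᴴ * (Qᴴ * E) * X := by
    rw [← conjTranspose_mul_mul_mul_mul_of_mem_unitaryGroup hU,
      ← conjTranspose_mul_mul_mul_mul_of_mem_unitaryGroup hU, hE'.eq, hQ'.eq,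
      ← hE.diagonal_diag, ← hQ.diagonal_diag, commute_diagonal]
  exact ((isUnit_conjTranspose X).2 hX).mul_left_cancel (hX.mul_right_cancel key)

end Matrix

/-- Proposition 3.1 (canonical form for regular pencils `λE - Q` with `EᴴQ = QᴴE`). -/
theorem stmt_0 {n : ℕ} (E Q : Matrix (Fin n) (Fin n) ℂ)
    (hreg : ∃ μ : ℂ, (μ • E - Q).det ≠ 0) :
    (Eᴴ * Q = Qᴴ * E ↔
      ∃ U X : Matrix (Fin n) (Fin n) ℂ,
        U ∈ Matrix.unitaryGroup (Fin n) ℂ ∧ IsUnit X ∧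
        (∀ i j, i ≠ j → (U * E * X) i j = 0) ∧
        (∀ i j, i ≠ j → (U * Q * X) i j = 0) ∧
        (∀ i j, ((U * E * X) i j).im = 0) ∧
        (∀ i j, ((U * Q * X) i j).im = 0) ∧
        (U * E * X) ^ 2 + (U * Q * X) ^ 2 = 1) ∧
    (Eᴴ * Q = Qᴴ * E → (Eᴴ * Q).PosSemidef →
      ∃ U X : Matrix (Fin n) (Fin n) ℂ,
        U ∈ Matrix.unitaryGroup (Fin n) ℂ ∧ IsUnit X ∧
        (∀ i j, i ≠ j → (U * E * X) i j = 0) ∧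
        (∀ i j, i ≠ j → (U * Q * X) i j = 0) ∧
        (∀ i j, ((U * E * X) i j).im = 0) ∧
        (∀ i j, ((U * Q * X) i j).im = 0) ∧
        (U * E * X) ^ 2 + (U * Q * X) ^ 2 = 1 ∧
        (∀ i, 0 ≤ ((U * E * X) i i).re) ∧
        (∀ i, 0 ≤ ((U * Q * X) i i).re)) := by
  refine ⟨⟨fun hEQ => ?_, ?_⟩, fun hEQ hpsd => ?_⟩
  · obtain ⟨U, hU, X, hX, c, s, h⟩ := exists_isCosSinForm hreg hEQ
    exact ⟨U, X, hU, hX, h.isDiag_left, h.isDiag_right, h.im_left, h.im_right,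
      h.sq_add_sq_eq_one⟩
  · rintro ⟨U, X, hU, hX, hE, hQ, hEim, hQim, -⟩
    exact conjTranspose_mul_comm_of_isDiag hU hX hE hQ
      (IsDiag.isHermitian_of_im_eq_zero hE hEim) (IsDiag.isHermitian_of_im_eq_zero hQ hQim)
  · obtain ⟨U₀, hU₀, X, hX, c, s, h₀⟩ := exists_isCosSinForm hreg hEQ
    obtain ⟨U, hU, h⟩ := h₀.exists_abs hU₀ (h₀.mul_nonneg_of_posSemidef hU₀ hpsd)
    exact ⟨U, X, hU, hX, h.isDiag_left, h.isDiag_right, h.im_left, h.im_right,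
      h.sq_add_sq_eq_one, fun i => by simp [h.left], fun i => by simp [h.right]⟩
end

section
/- Let E, Q ∈ ℂ^{m×n} be such that EᴴQ = QᴴE and EQᴴ = QEᴴ. Then there exist unitary matrices U ∈ ℂ^{m×m} and V ∈ ℂ^{n×n} such that UEV and UQV are diagonal with real entries (i.e., all entries with row index different from column index vanish, and the diagonal entries are real). Moreover, if in addition EᴴQ is positive semidefinite, then U and V can be chosen so that all entries of UEV and of UQV are nonnegative. -/
/-!
The Gram operators `E†E`, `E†Q`, `Q†Q` are self-adjoint (`E†Q = Q†E`) and, using also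
`EQ† = QE†`, pairwise commuting, so they have a common orthonormal eigenbasis `v`. Since
`(E†E)(Q†Q) = (E†Q)²`, the vectors `E vⱼ` and `Q vⱼ` have a real inner product attaining
equality in Cauchy–Schwarz, hence are real multiples of one vector `uⱼ` that is a unit vector or
zero; the `uⱼ` are mutually orthogonal because `⟪X vⱼ, Y vₖ⟫ = ⟪vⱼ, X†Y vₖ⟫ = 0` for
`X, Y ∈ {E, Q}`. Moving the indices with `uⱼ ≠ 0` to the front and completing those `uⱼ` to an
orthonormal basis of `ℂᵐ` gives `U` and `V`. The multiple for `E` can be taken to be `‖E vⱼ‖ ≥ 0`;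
the one for `Q` then has the sign of `⟪E vⱼ, Q vⱼ⟫ = ⟪vⱼ, E†Q vⱼ⟫`, which is `≥ 0` when `E†Q ⪰ 0`.
-/

open Matrix ComplexOrder
open Module LinearMap RCLike Finset
open scoped InnerProductSpace

theorem Fin.exists_perm_mem_iff_lt {n : ℕ} (S : Finset (Fin n)) :
    ∃ σ : Equiv.Perm (Fin n), ∀ j, σ j ∈ S ↔ (j : ℕ) < #S := by
  classical
  have hcard : Fintype.card {j : Fin n // (j : ℕ) < #S} = Fintype.card {j // j ∈ S} := by
    rw [Fintype.card_subtype, Fin.card_filter_val_lt, Fintype.card_coe,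
      min_eq_right (S.card_le_univ.trans_eq (Fintype.card_fin n))]
  have hcard' : Fintype.card {j : Fin n // ¬(j : ℕ) < #S} = Fintype.card {j // j ∉ S} := by
    rw [Fintype.card_subtype_compl, Fintype.card_subtype_compl, hcard]
  obtain ⟨f⟩ := Fintype.card_eq.1 hcard
  obtain ⟨g⟩ := Fintype.card_eq.1 hcard'
  refine ⟨f.subtypeCongr g, fun j => ?_⟩
  by_cases hj : (j : ℕ) < #S
  · simp [Equiv.subtypeCongr, hj, (f _).2]
  · simp [Equiv.subtypeCongr, hj, (g _).2]

variable {𝕜 H K : Type*} [RCLike 𝕜] [NormedAddCommGroup H] [InnerProductSpace 𝕜 H]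
  [NormedAddCommGroup K] [InnerProductSpace 𝕜 K]

theorem exists_real_smul_of_abs_inner_eq_norm_mul_norm {x y : K} {c : ℝ} (hc : ⟪x, y⟫_𝕜 = c)
    (hcs : |c| = ‖x‖ * ‖y‖) :
    ∃ (u : K) (a b : ℝ), u ∈ Submodule.span 𝕜 {x, y} ∧ (u = 0 ∨ ‖u‖ = 1) ∧
      x = (a : 𝕜) • u ∧ y = (b : 𝕜) • u ∧ 0 ≤ a ∧ (0 ≤ c → 0 ≤ b) := by
  rcases eq_or_ne x 0 with rfl | hx
  · refine ⟨(‖y‖⁻¹ : 𝕜) • y, 0, ‖y‖, Submodule.smul_mem _ _ (Submodule.subset_span (by simp)),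
      ?_, by simp, ?_, le_rfl, fun _ => norm_nonneg y⟩ <;> rcases eq_or_ne y 0 with rfl | hy
    · simp
    · exact Or.inr (norm_smul_inv_norm hy)
    · simp
    · rw [smul_smul, ← ofReal_inv, ← ofReal_mul, mul_inv_cancel₀ (norm_ne_zero_iff.2 hy),
        ofReal_one, one_smul]
  · have hy : y = (⟪x, y⟫_𝕜 / ⟪x, x⟫_𝕜) • x :=
      (((norm_inner_eq_norm_tfae 𝕜 x y).out 0 1).1 (by rw [hc, norm_ofReal, hcs]) :
        x = 0 ∨ _).resolve_left hx
    have hx' : (‖x‖ : 𝕜) ≠ 0 := ofReal_ne_zero.2 (norm_ne_zero_iff.2 hx)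
    refine ⟨(‖x‖⁻¹ : 𝕜) • x, ‖x‖, c / ‖x‖,
      Submodule.smul_mem _ _ (Submodule.subset_span (by simp)), Or.inr (norm_smul_inv_norm hx),
      ?_, ?_, norm_nonneg x, fun h => div_nonneg h (norm_nonneg x)⟩
    · rw [smul_smul, mul_inv_cancel₀ hx', one_smul]
    · rw [hy, hc, inner_self_eq_norm_sq_to_K, smul_smul]
      congr 1
      push_cast
      field_simp

theorem inner_mul_apply_eq_mul_of_eigen {v : H} (hv : ‖v‖ = 1) {A B : Module.End 𝕜 H}
    (hA : ∃ μ : 𝕜, A v = μ • v) (hB : ∃ μ : 𝕜, B v = μ • v) :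
    ⟪v, (A * B) v⟫_𝕜 = ⟪v, A v⟫_𝕜 * ⟪v, B v⟫_𝕜 := by
  obtain ⟨μ, hμ⟩ := hA
  obtain ⟨ν, hν⟩ := hB
  simp [hμ, hν, inner_smul_right, inner_self_eq_norm_sq_to_K, hv, mul_comm]

section FiniteDimensional

variable [FiniteDimensional 𝕜 H]

theorem DirectSum.IsInternal.exists_orthonormalBasis_subordinate {ι : Type*} [DecidableEq ι]
    {n : ℕ} (hn : finrank 𝕜 H = n) {V : ι → Submodule 𝕜 H} (hV : DirectSum.IsInternal V)
    (hV' : OrthogonalFamily 𝕜 (fun i => V i) fun i => (V i).subtypeₗᵢ) :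
    ∃ b : OrthonormalBasis (Fin n) 𝕜 H, ∀ a, ∃ i, b a ∈ V i := by
  classical
  let := hV.submodule_iSupIndep.fintypeNeBotOfFiniteDimensional
  have hV₀ := DirectSum.isInternal_ne_bot_iff.mpr hV
  have hV₀' := hV'.comp (Subtype.val_injective (p := fun i => V i ≠ ⊥))
  exact ⟨hV₀.subordinateOrthonormalBasis hn hV₀',
    fun a => ⟨_, hV₀.subordinateOrthonormalBasis_subordinate hn a hV₀'⟩⟩

theorem exists_orthonormalBasis_joint_eigenvectors {ι : Type*} {n : ℕ}
    (hn : finrank 𝕜 H = n) {T : ι → Module.End 𝕜 H} (hT : ∀ i, (T i).IsSymmetric)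
    (hC : Pairwise fun i j => Commute (T i) (T j)) :
    ∃ b : OrthonormalBasis (Fin n) 𝕜 H, ∀ j i, ∃ μ : 𝕜, T i (b j) = μ • b j := by
  classical
  obtain ⟨b, hb⟩ := (IsSymmetric.directSum_isInternal_of_pairwise_commute hT hC
    ).exists_orthonormalBasis_subordinate hn (IsSymmetric.orthogonalFamily_iInf_eigenspaces hT)
  refine ⟨b, fun j i => ?_⟩
  obtain ⟨χ, hχ⟩ := hb j
  exact ⟨χ i, Module.End.mem_eigenspace_iff.1 ((Submodule.mem_iInf _).1 hχ i)⟩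

end FiniteDimensional

section Gram

variable [FiniteDimensional 𝕜 H] [FiniteDimensional 𝕜 K] {e q : H →ₗ[𝕜] K}

theorem adjoint_comp_self_mul_adjoint_comp_self (h2 : e ∘ₗ adjoint q = q ∘ₗ adjoint e) :
    (adjoint e ∘ₗ e) * (adjoint q ∘ₗ q) = (adjoint e ∘ₗ q) * (adjoint e ∘ₗ q) := by
  ext x
  simpa using congrArg (adjoint e) (LinearMap.congr_fun h2 (q x))

theorem commute_adjoint_comp_self_adjoint_comp (h1 : adjoint e ∘ₗ q = adjoint q ∘ₗ e)
    (h2 : e ∘ₗ adjoint q = q ∘ₗ adjoint e) :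
    Commute (adjoint e ∘ₗ e) (adjoint e ∘ₗ q) := by
  refine LinearMap.ext fun x => ?_
  change adjoint e (e (adjoint e (q x))) = adjoint e (q (adjoint e (e x)))
  have h1x : adjoint e (q x) = adjoint q (e x) := LinearMap.congr_fun h1 x
  have h2x : e (adjoint q (e x)) = q (adjoint e (e x)) := LinearMap.congr_fun h2 (e x)
  rw [h1x, h2x]

theorem commute_adjoint_comp_self_adjoint_comp_self (h1 : adjoint e ∘ₗ q = adjoint q ∘ₗ e)
    (h2 : e ∘ₗ adjoint q = q ∘ₗ adjoint e) :
    Commute (adjoint e ∘ₗ e) (adjoint q ∘ₗ q) := by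
  rw [Commute, SemiconjBy, adjoint_comp_self_mul_adjoint_comp_self h2,
    adjoint_comp_self_mul_adjoint_comp_self h2.symm, h1]

theorem exists_orthonormalBasis_singular_pairs {n : ℕ} (hn : finrank 𝕜 H = n)
    (h1 : adjoint e ∘ₗ q = adjoint q ∘ₗ e) (h2 : e ∘ₗ adjoint q = q ∘ₗ adjoint e) :
    ∃ (v : OrthonormalBasis (Fin n) 𝕜 H) (u : Fin n → K) (a b : Fin n → ℝ),
      Pairwise (fun j k => ⟪u j, u k⟫_𝕜 = 0) ∧ (∀ j, u j = 0 ∨ ‖u j‖ = 1) ∧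
      (∀ j, e (v j) = (a j : 𝕜) • u j) ∧ (∀ j, q (v j) = (b j : 𝕜) • u j) ∧
      (∀ j, 0 ≤ a j) ∧ ((adjoint e ∘ₗ q).IsPositive → ∀ j, 0 ≤ b j) := by
  have hsymm : (adjoint e ∘ₗ q).IsSymmetric := by
    rw [isSymmetric_iff_isSelfAdjoint, isSelfAdjoint_iff', adjoint_comp, adjoint_adjoint, h1]
  have hEE_EQ := commute_adjoint_comp_self_adjoint_comp h1 h2
  have hEQ_QQ : Commute (adjoint e ∘ₗ q) (adjoint q ∘ₗ q) := by
    rw [h1]; exact (commute_adjoint_comp_self_adjoint_comp h1.symm h2.symm).symm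
  have hEE_QQ := commute_adjoint_comp_self_adjoint_comp_self h1 h2
  obtain ⟨v, hv⟩ := exists_orthonormalBasis_joint_eigenvectors hn
    (T := ![adjoint e ∘ₗ e, adjoint e ∘ₗ q, adjoint q ∘ₗ q])
    (fun i => by
      fin_cases i
      exacts [isSymmetric_adjoint_comp_self e, hsymm, isSymmetric_adjoint_comp_self q])
    (fun i j _ => by
      fin_cases i <;> fin_cases j <;>
        simp [hEE_EQ, hEE_EQ.symm, hEQ_QQ, hEQ_QQ.symm, hEE_QQ, hEE_QQ.symm])
  have hee : ∀ j, ∃ μ : 𝕜, (adjoint e ∘ₗ e) (v j) = μ • v j := fun j => hv j 0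
  have heq : ∀ j, ∃ μ : 𝕜, (adjoint e ∘ₗ q) (v j) = μ • v j := fun j => hv j 1
  have hqq : ∀ j, ∃ μ : 𝕜, (adjoint q ∘ₗ q) (v j) = μ • v j := fun j => hv j 2
  have gram : ∀ (X Y : H →ₗ[𝕜] K) x y, ⟪X x, Y y⟫_𝕜 = ⟪x, (adjoint X ∘ₗ Y) y⟫_𝕜 :=
    fun X Y x y => (adjoint_inner_right X x (Y y)).symm
  have hc : ∀ j, ⟪e (v j), q (v j)⟫_𝕜 = (re ⟪e (v j), q (v j)⟫_𝕜 : 𝕜) := fun j => by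
    rw [gram, hsymm.coe_re_inner_self_apply]
  have hcs : ∀ j, |re ⟪e (v j), q (v j)⟫_𝕜| = ‖e (v j)‖ * ‖q (v j)‖ := by
    intro j
    have hv1 := v.orthonormal.1 j
    have key : ⟪e (v j), q (v j)⟫_𝕜 ^ 2 = ((‖e (v j)‖ * ‖q (v j)‖) ^ 2 : ℝ) := by
      rw [sq, gram, ← inner_mul_apply_eq_mul_of_eigen hv1 (heq j) (heq j),
        ← adjoint_comp_self_mul_adjoint_comp_self h2,
        inner_mul_apply_eq_mul_of_eigen hv1 (hee j) (hqq j), ← gram, ← gram,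
        inner_self_eq_norm_sq_to_K, inner_self_eq_norm_sq_to_K]
      push_cast
      ring
    rw [hc j] at key
    norm_cast at key
    rw [← abs_of_nonneg (mul_nonneg (norm_nonneg (e (v j))) (norm_nonneg (q (v j))))]
    exact sq_eq_sq_iff_abs_eq_abs _ _ |>.1 key
  choose u a b hspan hunit hea hqb ha hb using
    fun j => exists_real_smul_of_abs_inner_eq_norm_mul_norm (hc j) (hcs j)
  have hperp : ∀ {j k}, j ≠ k → ∀ {T : Module.End 𝕜 H}, (∃ μ : 𝕜, T (v k) = μ • v k) →
      ⟪v j, T (v k)⟫_𝕜 = 0 := by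
    rintro j k hjk T ⟨μ, hμ⟩
    rw [hμ, inner_smul_right, v.orthonormal.2 hjk, mul_zero]
  refine ⟨v, u, a, b, fun j k hjk => ?_, hunit, hea, hqb, ha,
    fun hpos j => hb j (by rw [gram]; exact hpos.re_inner_nonneg_right _)⟩
  refine (Submodule.isOrtho_span.2 ?_).inner_eq (hspan j) (hspan k)
  simp only [Set.mem_insert_iff, Set.mem_singleton_iff]
  rintro _ (rfl | rfl) _ (rfl | rfl) <;> rw [gram]
  · exact hperp hjk (hee k)
  · exact hperp hjk (heq k)
  · rw [← h1]; exact hperp hjk (heq k)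
  · exact hperp hjk (hqq k)

end Gram

theorem exists_perm_orthonormalBasis_inner_eq {m n : ℕ} [FiniteDimensional 𝕜 K]
    (hm : finrank 𝕜 K = m) {u : Fin n → K} (hu : Pairwise fun j k => ⟪u j, u k⟫_𝕜 = 0)
    (hu1 : ∀ j, u j = 0 ∨ ‖u j‖ = 1) :
    ∃ (σ : Equiv.Perm (Fin n)) (w : OrthonormalBasis (Fin m) 𝕜 K),
      ∀ i j, ⟪w i, u (σ j)⟫_𝕜 = if (i : ℕ) = j then (‖u (σ j)‖ : 𝕜) else 0 := by
  classical
  set S := univ.filter fun j => u j ≠ 0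
  have hS : Orthonormal 𝕜 fun j : S => u j :=
    ⟨fun j => (hu1 j).resolve_left (mem_filter.1 j.2).2,
      fun j k hjk => hu (Subtype.coe_injective.ne hjk)⟩
  have hSm : #S ≤ m := by simpa [hm] using hS.linearIndependent.fintype_card_le_finrank
  obtain ⟨σ, hσ⟩ := Fin.exists_perm_mem_iff_lt S
  let f : Fin m → K := fun i => if h : (i : ℕ) < n then u (σ ⟨i, h⟩) else 0
  have hlt : ∀ {i : ℕ}, i < #S → i < n :=
    fun hi => hi.trans_le (S.card_le_univ.trans_eq (Fintype.card_fin n))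
  have hfi : ∀ i : Fin m, (hi : (i : ℕ) < #S) → f i = u (σ ⟨i, hlt hi⟩) :=
    fun i hi => dif_pos (hlt hi)
  have hf : Orthonormal 𝕜 ({i : Fin m | (i : ℕ) < #S}.domRestrict f) := by
    refine ⟨fun i => ?_, fun i i' hii' => ?_⟩
    · rw [Set.domRestrict_apply, hfi i i.2]
      exact (hu1 _).resolve_left (mem_filter.1 ((hσ ⟨i, hlt i.2⟩).2 i.2)).2
    · show ⟪_, _⟫_𝕜 = 0
      rw [Set.domRestrict_apply, Set.domRestrict_apply, hfi i i.2, hfi i' i'.2]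
      refine hu (σ.injective.ne fun h => hii' ?_)
      ext
      simpa using congrArg Fin.val h
  obtain ⟨w, hw⟩ := hf.exists_orthonormalBasis_extension_of_card_eq (by simp [hm])
  refine ⟨σ, w, fun i j => ?_⟩
  by_cases hj : (j : ℕ) < #S
  · have hwj : u (σ j) = w ⟨j, hj.trans_le hSm⟩ := by
      rw [hw _ hj]
      simp [f, j.2]
    rw [hwj, orthonormal_iff_ite.1 w.orthonormal, w.orthonormal.1]
    simp [Fin.ext_iff]
  · have : u (σ j) = 0 := by
      by_contra h
      exact hj ((hσ j).1 (mem_filter.2 ⟨mem_univ _, h⟩))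
    simp [this]

theorem Matrix.toEuclideanLin_conjTranspose_mul {l m n : Type*} [Fintype l] [DecidableEq l]
    [Fintype m] [DecidableEq m] [Fintype n] [DecidableEq n]
    (A : Matrix l m 𝕜) (B : Matrix l n 𝕜) :
    toEuclideanLin (Aᴴ * B) = adjoint (toEuclideanLin A) ∘ₗ toEuclideanLin B := by
  rw [toLpLin_mul_same, toEuclideanLin_conjTranspose_eq_adjoint]

theorem Matrix.toEuclideanLin_mul_conjTranspose {l m n : Type*} [Fintype l] [DecidableEq l]
    [Fintype m] [DecidableEq m] [Fintype n] [DecidableEq n]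
    (A : Matrix l n 𝕜) (B : Matrix m n 𝕜) :
    toEuclideanLin (A * Bᴴ) = toEuclideanLin A ∘ₗ adjoint (toEuclideanLin B) := by
  rw [toLpLin_mul_same, toEuclideanLin_conjTranspose_eq_adjoint]

theorem Matrix.conjTranspose_toMatrix_mul_mul_toMatrix_apply {ι κ : Type*} [Fintype ι]
    [DecidableEq ι] [Fintype κ] [DecidableEq κ]
    (w : OrthonormalBasis ι 𝕜 (EuclideanSpace 𝕜 ι)) (v : OrthonormalBasis κ 𝕜 (EuclideanSpace 𝕜 κ))
    (A : Matrix ι κ 𝕜) (i : ι) (j : κ) :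
    (((EuclideanSpace.basisFun ι 𝕜).toBasis.toMatrix w)ᴴ * A *
      (EuclideanSpace.basisFun κ 𝕜).toBasis.toMatrix v) i j =
      ⟪w i, toEuclideanLin A (v j)⟫_𝕜 := by
  simp [Matrix.mul_apply, Basis.toMatrix_apply, EuclideanSpace.inner_eq_star_dotProduct,
    dotProduct, mulVec, Finset.sum_mul]
  rw [Finset.sum_comm]
  exact Finset.sum_congr rfl fun _ _ => Finset.sum_congr rfl fun _ _ => by ring

theorem Matrix.exists_unitary_mul_mul_eq_diagonal {m n : ℕ} {E Q : Matrix (Fin m) (Fin n) 𝕜}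
    (h1 : Eᴴ * Q = Qᴴ * E) (h2 : E * Qᴴ = Q * Eᴴ) :
    ∃ (U : Matrix (Fin m) (Fin m) 𝕜) (V : Matrix (Fin n) (Fin n) 𝕜) (a b : Fin n → ℝ),
      U ∈ unitaryGroup (Fin m) 𝕜 ∧ V ∈ unitaryGroup (Fin n) 𝕜 ∧
      (∀ i j, (U * E * V) i j = if (i : ℕ) = j then (a j : 𝕜) else 0) ∧
      (∀ i j, (U * Q * V) i j = if (i : ℕ) = j then (b j : 𝕜) else 0) ∧
      (∀ j, 0 ≤ a j) ∧ ((Eᴴ * Q).PosSemidef → ∀ j, 0 ≤ b j) := by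
  have h1' : adjoint (toEuclideanLin E) ∘ₗ toEuclideanLin Q =
      adjoint (toEuclideanLin Q) ∘ₗ toEuclideanLin E := by
    rw [← toEuclideanLin_conjTranspose_mul, ← toEuclideanLin_conjTranspose_mul, h1]
  have h2' : toEuclideanLin E ∘ₗ adjoint (toEuclideanLin Q) =
      toEuclideanLin Q ∘ₗ adjoint (toEuclideanLin E) := by
    rw [← toEuclideanLin_mul_conjTranspose, ← toEuclideanLin_mul_conjTranspose, h2]
  obtain ⟨v, u, a, b, hu, hu1, hea, hqb, ha, hb⟩ :=
    exists_orthonormalBasis_singular_pairs finrank_euclideanSpace_fin h1' h2'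
  obtain ⟨σ, w, hw⟩ :=
    exists_perm_orthonormalBasis_inner_eq (finrank_euclideanSpace_fin (𝕜 := 𝕜) (n := m)) hu hu1
  have entry : ∀ (A : Matrix (Fin m) (Fin n) 𝕜) (c : Fin n → ℝ),
      (∀ j, toEuclideanLin A (v j) = (c j : 𝕜) • u j) → ∀ i j,
      (((EuclideanSpace.basisFun _ 𝕜).toBasis.toMatrix w)ᴴ * A *
        (EuclideanSpace.basisFun _ 𝕜).toBasis.toMatrix (v.reindex σ.symm)) i j =
        if (i : ℕ) = j then ((c (σ j) * ‖u (σ j)‖ : ℝ) : 𝕜) else 0 := by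
    intro A c hc i j
    rw [conjTranspose_toMatrix_mul_mul_toMatrix_apply, OrthonormalBasis.reindex_apply,
      Equiv.symm_symm, hc, inner_smul_right, hw]
    split_ifs <;> simp
  refine ⟨_, _, fun j => a (σ j) * ‖u (σ j)‖, fun j => b (σ j) * ‖u (σ j)‖,
    Unitary.star_mem ((EuclideanSpace.basisFun _ 𝕜).toMatrix_orthonormalBasis_mem_unitary w),
    (EuclideanSpace.basisFun _ 𝕜).toMatrix_orthonormalBasis_mem_unitary _,
    entry E a hea, entry Q b hqb, fun j => mul_nonneg (ha _) (norm_nonneg _),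
    fun hpos j => mul_nonneg (hb ?_ _) (norm_nonneg _)⟩
  rwa [← toEuclideanLin_conjTranspose_mul, isPositive_toEuclideanLin_iff]

/-- Proposition 3.3: simultaneous real diagonalization of rectangular `E, Q`
with `EᴴQ = QᴴE` and `EQᴴ = QEᴴ` by unitary equivalence. -/
theorem stmt_2 {m n : ℕ} (E Q : Matrix (Fin m) (Fin n) ℂ)
    (h1 : Eᴴ * Q = Qᴴ * E) (h2 : E * Qᴴ = Q * Eᴴ) :
    (∃ (U : Matrix (Fin m) (Fin m) ℂ) (V : Matrix (Fin n) (Fin n) ℂ),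
      U ∈ Matrix.unitaryGroup (Fin m) ℂ ∧ V ∈ Matrix.unitaryGroup (Fin n) ℂ ∧
      (∀ (i : Fin m) (j : Fin n), (i : ℕ) ≠ (j : ℕ) → (U * E * V) i j = 0) ∧
      (∀ (i : Fin m) (j : Fin n), (i : ℕ) ≠ (j : ℕ) → (U * Q * V) i j = 0) ∧
      (∀ i j, ((U * E * V) i j).im = 0) ∧
      (∀ i j, ((U * Q * V) i j).im = 0)) ∧
    ((Eᴴ * Q).PosSemidef →
      ∃ (U : Matrix (Fin m) (Fin m) ℂ) (V : Matrix (Fin n) (Fin n) ℂ),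
        U ∈ Matrix.unitaryGroup (Fin m) ℂ ∧ V ∈ Matrix.unitaryGroup (Fin n) ℂ ∧
        (∀ (i : Fin m) (j : Fin n), (i : ℕ) ≠ (j : ℕ) → (U * E * V) i j = 0) ∧
        (∀ (i : Fin m) (j : Fin n), (i : ℕ) ≠ (j : ℕ) → (U * Q * V) i j = 0) ∧
        (∀ i j, ((U * E * V) i j).im = 0) ∧
        (∀ i j, ((U * Q * V) i j).im = 0) ∧
        (∀ i j, 0 ≤ ((U * E * V) i j).re) ∧
        (∀ i j, 0 ≤ ((U * Q * V) i j).re)) := by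
  obtain ⟨U, V, a, b, hU, hV, hE, hQ, ha, hb⟩ := exists_unitary_mul_mul_eq_diagonal h1 h2
  have real_diagonal : ∀ {D : Matrix (Fin m) (Fin n) ℂ} {c : Fin n → ℝ},
      (∀ i j, D i j = if (i : ℕ) = j then (c j : ℂ) else 0) →
      (∀ (i : Fin m) (j : Fin n), (i : ℕ) ≠ j → D i j = 0) ∧ (∀ i j, (D i j).im = 0) ∧
      ((∀ j, 0 ≤ c j) → ∀ i j, 0 ≤ (D i j).re) := by
    intro D c hD
    refine ⟨fun i j hij => by rw [hD, if_neg hij], fun i j => ?_, fun hc i j => ?_⟩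
    · rw [hD]; split_ifs <;> simp
    · rw [hD]; split_ifs <;> simp [hc]
  obtain ⟨hE0, hEim, hEre⟩ := real_diagonal hE
  obtain ⟨hQ0, hQim, hQre⟩ := real_diagonal hQ
  exact ⟨⟨U, V, hU, hV, hE0, hQ0, hEim, hQim⟩,
    fun hpos => ⟨U, V, hU, hV, hE0, hQ0, hEim, hQim, hEre ha, hQre (hb hpos)⟩⟩
end

section
/- Let E, Q ∈ ℂ^{n×n} be such that EᴴQ = QᴴE. If the pencil λE − Q is singular, i.e., det(μE − Q) = 0 for every μ ∈ ℂ, then E and Q have a common nullspace: there exists a nonzero vector x ∈ ℂⁿ with Ex = 0 and Qx = 0. -/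
open Matrix

/-!
Pick `x ≠ 0` with `(i E - Q) x = 0`, so `Q x = i E x`. Expanding `(E x)ᴴ (Q x)` once as
`i ‖E x‖²` and once, through `xᴴ EᴴQ x = xᴴ QᴴE x`, as `(Q x)ᴴ (E x) = -i ‖E x‖²` forces
`E x = 0`, hence also `Q x = 0`.
-/

section

open scoped ComplexOrder

variable {m n : Type*} [Fintype m] [Fintype n]

theorem star_mulVec_dotProduct_mulVec (A B : Matrix m n ℂ) (x : n → ℂ) :
    star (A *ᵥ x) ⬝ᵥ (B *ᵥ x) = star x ⬝ᵥ ((Aᴴ * B) *ᵥ x) := by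
  rw [star_mulVec, ← mulVec_mulVec, dotProduct_mulVec, dotProduct_mulVec,
    dotProduct_mulVec, vecMul_vecMul]

theorem mulVec_eq_zero_of_mulVec_eq_smul_mulVec {E Q : Matrix m n ℂ} (hH : Eᴴ * Q = Qᴴ * E)
    {μ : ℂ} (hμ : μ.im ≠ 0) {x : n → ℂ} (hx : Q *ᵥ x = μ • E *ᵥ x) : E *ᵥ x = 0 := by
  set s := star (E *ᵥ x) ⬝ᵥ (E *ᵥ x)
  have hμs : star (E *ᵥ x) ⬝ᵥ (Q *ᵥ x) = μ * s := by
    rw [hx, dotProduct_smul, smul_eq_mul]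
  have hconjμs : star (E *ᵥ x) ⬝ᵥ (Q *ᵥ x) = starRingEnd ℂ μ * s := by
    rw [star_mulVec_dotProduct_mulVec, hH, ← star_mulVec_dotProduct_mulVec, hx, star_smul,
      smul_dotProduct, smul_eq_mul, Complex.star_def]
  have hμ' : μ - starRingEnd ℂ μ ≠ 0 :=
    sub_ne_zero.2 fun h => hμ (Complex.conj_eq_iff_im.1 h.symm)
  have hs : s = 0 := by
    have : (μ - starRingEnd ℂ μ) * s = 0 := by linear_combination hμs.symm.trans hconjμs
    exact (mul_eq_zero.1 this).resolve_left hμ'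
  exact dotProduct_star_self_eq_zero.1 hs

end

/-- Corollary 3.6: if `EᴴQ = QᴴE` and the square pencil `λE - Q` is singular,
then `E` and `Q` have a common nullspace. -/
theorem stmt_4 {n : ℕ} (E Q : Matrix (Fin n) (Fin n) ℂ)
    (hH : Eᴴ * Q = Qᴴ * E)
    (hsing : ∀ μ : ℂ, (μ • E - Q).det = 0) :
    ∃ x : Fin n → ℂ, x ≠ 0 ∧ E *ᵥ x = 0 ∧ Q *ᵥ x = 0 := by
  obtain ⟨x, hx0, hx⟩ := exists_mulVec_eq_zero_iff.2 (hsing Complex.I)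
  have hQx : Q *ᵥ x = Complex.I • E *ᵥ x := by
    rw [sub_mulVec, smul_mulVec, sub_eq_zero] at hx
    exact hx.symm
  have hEx : E *ᵥ x = 0 :=
    mulVec_eq_zero_of_mulVec_eq_smul_mulVec hH (by simp) hQx
  exact ⟨x, hx0, hEx, by rw [hQx, hEx, smul_zero]⟩
end

section
/- For k ≥ 2, let E₀, Q₀ ∈ ℂ^{k×(k−1)} be the matrices with (E₀)_{ij} = 1 if i = j and 0 otherwise, and (Q₀)_{ij} = 1 if i = j + 1 and 0 otherwise (so that λE₀ − Q₀ is the Kronecker block 𝓛ᵀ_{k−1} associated with a left minimal index k − 1). Let S ∈ ℂ^{l×k} and set E₁ = S·E₀ and Q₁ = S·Q₀. Then E₁ᴴQ₁ = Q₁ᴴE₁ if and only if H := SᴴS is a real Hankel matrix, i.e., there exist real numbers a₀, a₁, …, a_{2k−2} such that H_{ij} = a_{i+j−2} for all 1 ≤ i, j ≤ k. -/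
/-!
Write `H = SᴴS`. Since `E₀` and `Q₀` pick out the first and the last `k - 1` columns of the
identity, `E₁ᴴQ₁ = E₀ᴴ H Q₀` and `Q₁ᴴE₁ = Q₀ᴴ H E₀` are the submatrices `H(i, j + 1)` and
`H(i + 1, j)`, so their equality says that `H` is constant along antidiagonals, i.e. Hankel.
A Hermitian Hankel matrix is real: `conj H(i, j) = H(j, i)` lies on the same antidiagonal.
-/

open Matrix

namespace Matrix

variable {m n o α : Type*}

theorem conjTranspose_one_submatrix_mul_mul [Fintype m] [DecidableEq m] [Semiring α] [StarRing α]
    (H : Matrix m m α) (f : n → m) (g : o → m) :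
    ((1 : Matrix m m α).submatrix id f)ᴴ * H * (1 : Matrix m m α).submatrix id g =
      H.submatrix f g := by
  rw [conjTranspose_submatrix, conjTranspose_one, ← Equiv.coe_refl,
    one_submatrix_mul f (Equiv.refl m), mul_submatrix_one (Equiv.refl m) g]
  rfl

theorem apply_eq_apply_of_add_eq {k : ℕ} {H : Matrix (Fin (k + 1)) (Fin (k + 1)) α}
    (hH : H.submatrix Fin.castSucc Fin.succ = H.submatrix Fin.succ Fin.castSucc)
    {i j i' j' : Fin (k + 1)} (hsum : (i : ℕ) + j = i' + j') : H i j = H i' j' := by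
  wlog h : (i : ℕ) ≤ i' generalizing i j i' j'
  · exact (this hsum.symm (by omega)).symm
  obtain ⟨d, hd⟩ := Nat.exists_eq_add_of_le h
  clear h
  induction d generalizing i j with
  | zero =>
    obtain rfl : i = i' := Fin.ext hd.symm
    obtain rfl : j = j' := Fin.ext (by omega)
    rfl
  | succ d ih =>
    have hi' := i'.isLt
    have hj := j.isLt
    obtain ⟨i₀, rfl⟩ : ∃ i₀ : Fin k, i₀.castSucc = i := ⟨⟨i, by omega⟩, rfl⟩
    obtain ⟨j₀, rfl⟩ : ∃ j₀ : Fin k, j₀.succ = j :=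
      ⟨⟨j - 1, by omega⟩, Fin.ext (by simp only [Fin.val_succ]; omega)⟩
    simp only [Fin.val_castSucc, Fin.val_succ] at hd hsum
    rw [← submatrix_apply H Fin.castSucc Fin.succ, hH, submatrix_apply]
    exact ih (by simp only [Fin.val_succ, Fin.val_castSucc]; omega)
      (by simp only [Fin.val_succ]; omega)

theorem submatrix_castSucc_succ_eq_iff {k : ℕ} (H : Matrix (Fin (k + 1)) (Fin (k + 1)) α) :
    H.submatrix Fin.castSucc Fin.succ = H.submatrix Fin.succ Fin.castSucc ↔
      ∃ c : ℕ → α, ∀ i j, H i j = c (i + j) := by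
  constructor
  · intro hH
    have hfactor : (Function.uncurry H).FactorsThrough fun p : Fin (k + 1) × Fin (k + 1) ↦
        (p.1 : ℕ) + p.2 := by
      rintro ⟨i, j⟩ ⟨i', j'⟩ hsum
      exact apply_eq_apply_of_add_eq hH hsum
    exact ⟨_, fun i j ↦ (hfactor.extend_apply (fun _ ↦ H 0 0) (i, j)).symm⟩
  · rintro ⟨c, hc⟩
    ext i j
    simp only [submatrix_apply, hc, Fin.val_castSucc, Fin.val_succ]
    congr 1; omega

theorem IsHermitian.exists_apply_eq_ofReal_iff {ι 𝕜 : Type*} [RCLike 𝕜] {H : Matrix ι ι 𝕜}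
    (hH : H.IsHermitian) (w : ι → ι → ℕ) (hw : ∀ i j, w i j = w j i) :
    (∃ c : ℕ → 𝕜, ∀ i j, H i j = c (w i j)) ↔ ∃ a : ℕ → ℝ, ∀ i j, H i j = (a (w i j) : 𝕜) := by
  constructor
  · rintro ⟨c, hc⟩
    refine ⟨fun s ↦ RCLike.re (c s), fun i j ↦ ?_⟩
    have hself_adjoint : star (H i j) = H i j := by rw [hH.apply j i, hc, hc, hw]
    show H i j = (RCLike.re (c (w i j)) : 𝕜)
    rw [← hc, RCLike.conj_eq_iff_re.mp hself_adjoint]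
  · rintro ⟨a, ha⟩
    exact ⟨fun s ↦ (a s : 𝕜), ha⟩

end Matrix

theorem stmt_6_general {k l : ℕ} (S : Matrix (Fin l) (Fin k) ℂ)
    (E₀ Q₀ : Matrix (Fin k) (Fin (k - 1)) ℂ)
    (hE₀ : ∀ (i : Fin k) (j : Fin (k - 1)), E₀ i j = if (i : ℕ) = (j : ℕ) then 1 else 0)
    (hQ₀ : ∀ (i : Fin k) (j : Fin (k - 1)), Q₀ i j = if (i : ℕ) = (j : ℕ) + 1 then 1 else 0) :
    (S * E₀)ᴴ * (S * Q₀) = (S * Q₀)ᴴ * (S * E₀) ↔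
      ∃ a : ℕ → ℝ, ∀ i j : Fin k, (Sᴴ * S) i j = ((a ((i : ℕ) + (j : ℕ)) : ℝ) : ℂ) := by
  obtain _ | k := k
  · exact iff_of_true (ext fun i ↦ i.elim0) ⟨0, fun i ↦ i.elim0⟩
  obtain rfl : E₀ = (1 : Matrix (Fin (k + 1)) (Fin (k + 1)) ℂ).submatrix id Fin.castSucc := by
    ext i j; simp [hE₀, one_apply, Fin.ext_iff]
  obtain rfl : Q₀ = (1 : Matrix (Fin (k + 1)) (Fin (k + 1)) ℂ).submatrix id Fin.succ := by
    ext i j; simp [hQ₀, one_apply, Fin.ext_iff]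
  have hGram (A B : Matrix (Fin (k + 1)) (Fin k) ℂ) :
      (S * A)ᴴ * (S * B) = Aᴴ * (Sᴴ * S) * B := by
    rw [conjTranspose_mul, Matrix.mul_assoc, Matrix.mul_assoc, ← Matrix.mul_assoc Sᴴ]
  rw [hGram, hGram, conjTranspose_one_submatrix_mul_mul, conjTranspose_one_submatrix_mul_mul,
    submatrix_castSucc_succ_eq_iff]
  exact (isHermitian_conjTranspose_mul_self S).exists_apply_eq_ofReal_iff _ fun i j ↦ add_comm _ _

/-- Proposition 3.8 (i): with `λE₀ - Q₀` the Kronecker block `𝓛ᵀ_{k-1}`, the matrices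
`E₁ = S·E₀`, `Q₁ = S·Q₀` satisfy `E₁ᴴQ₁ = Q₁ᴴE₁` if and only if `SᴴS` is a real Hankel
matrix. -/
theorem stmt_6 {k l : ℕ} (hk : 2 ≤ k) (S : Matrix (Fin l) (Fin k) ℂ)
    (E₀ Q₀ : Matrix (Fin k) (Fin (k - 1)) ℂ)
    (hE₀ : ∀ (i : Fin k) (j : Fin (k - 1)), E₀ i j = if (i : ℕ) = (j : ℕ) then 1 else 0)
    (hQ₀ : ∀ (i : Fin k) (j : Fin (k - 1)), Q₀ i j = if (i : ℕ) = (j : ℕ) + 1 then 1 else 0) :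
    (S * E₀)ᴴ * (S * Q₀) = (S * Q₀)ᴴ * (S * E₀) ↔
      ∃ a : ℕ → ℝ, ∀ i j : Fin k, (Sᴴ * S) i j = ((a ((i : ℕ) + (j : ℕ)) : ℝ) : ℂ) :=
  stmt_6_general S E₀ Q₀ hE₀ hQ₀
end

section
/- Let E, Q, L ∈ ℂ^{n×n} with EᴴQ = QᴴE and L + Lᴴ negative semidefinite. If the pencil P(λ) = λE − LQ is regular (i.e., det(λ₀E − LQ) ≠ 0 for some λ₀ ∈ ℂ), then the pencil λE − Q is regular as well (i.e., det(μ₀E − Q) ≠ 0 for some μ₀ ∈ ℂ). -/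
/-!
Take `μ₀ = i`. If `(iE - Q)x = 0`, then `Qx = i·Ex`, so `xᴴEᴴQx = i‖Ex‖²`; since `EᴴQ`
is Hermitian this number is real, forcing `Ex = 0` and hence `Qx = 0`. Such an `x` lies in
the kernel of `λE - LQ` for every `λ`, so regularity of that pencil forces `x = 0`.
-/

open Matrix ComplexOrder

namespace Matrix

variable {ι : Type*} [Fintype ι]

theorem star_mulVec_dotProduct_mulVec {κ R : Type*} [Fintype κ] [CommSemiring R] [StarRing R]
    (A B : Matrix κ ι R) (x : ι → R) :
    star (A *ᵥ x) ⬝ᵥ (B *ᵥ x) = star x ⬝ᵥ ((Aᴴ * B) *ᵥ x) := by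
  rw [star_mulVec, ← dotProduct_mulVec, mulVec_mulVec]

theorem mulVec_eq_zero_of_mulVec_eq_I_smul {E Q : Matrix ι ι ℂ} (hH : Eᴴ * Q = Qᴴ * E)
    {x : ι → ℂ} (hx : Q *ᵥ x = Complex.I • E *ᵥ x) : E *ᵥ x = 0 := by
  set y := E *ᵥ x
  have hsymm : star y ⬝ᵥ (Q *ᵥ x) = star (Q *ᵥ x) ⬝ᵥ y := by
    rw [star_mulVec_dotProduct_mulVec, star_mulVec_dotProduct_mulVec, hH]
  rw [hx, star_smul, dotProduct_smul, smul_dotProduct, Complex.star_def, Complex.conj_I,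
    smul_eq_mul, smul_eq_mul, neg_mul, eq_neg_iff_add_eq_zero, ← two_mul,
    mul_eq_zero, mul_eq_zero] at hsymm
  simpa [dotProduct_star_self_eq_zero, Complex.I_ne_zero] using hsymm

theorem exists_mulVec_eq_zero_of_det_I_smul_sub_eq_zero [DecidableEq ι] {E Q : Matrix ι ι ℂ}
    (hH : Eᴴ * Q = Qᴴ * E) (hdet : (Complex.I • E - Q).det = 0) :
    ∃ x ≠ 0, E *ᵥ x = 0 ∧ Q *ᵥ x = 0 := by
  obtain ⟨x, hx0, hx⟩ := exists_mulVec_eq_zero_iff.2 hdet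
  have hQx : Q *ᵥ x = Complex.I • E *ᵥ x := by
    rwa [sub_mulVec, sub_eq_zero, smul_mulVec, eq_comm] at hx
  have hEx := mulVec_eq_zero_of_mulVec_eq_I_smul hH hQx
  exact ⟨x, hx0, hEx, by rw [hQx, hEx, smul_zero]⟩

end Matrix

theorem stmt_9_general {n : ℕ} (E Q L : Matrix (Fin n) (Fin n) ℂ)
    (hH : Eᴴ * Q = Qᴴ * E)
    (hreg : ∃ lam0 : ℂ, (lam0 • E - L * Q).det ≠ 0) :
    ∃ mu0 : ℂ, (mu0 • E - Q).det ≠ 0 := by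
  obtain ⟨lam0, hlam0⟩ := hreg
  refine ⟨Complex.I, fun hdet => hlam0 ?_⟩
  obtain ⟨x, hx0, hEx, hQx⟩ := exists_mulVec_eq_zero_of_det_I_smul_sub_eq_zero hH hdet
  refine exists_mulVec_eq_zero_iff.1 ⟨x, hx0, ?_⟩
  rw [sub_mulVec, smul_mulVec, hEx, ← mulVec_mulVec, hQx, mulVec_zero, smul_zero, sub_zero]

/-- Proposition 4.1: if `P(λ) = λE - LQ` is regular, `EᴴQ = QᴴE` and `L + Lᴴ ⪯ 0`,
then the pencil `λE - Q` is regular as well. -/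
theorem stmt_9 {n : ℕ} (E Q L : Matrix (Fin n) (Fin n) ℂ)
    (hH : Eᴴ * Q = Qᴴ * E)
    (hL : (-(L + Lᴴ)).PosSemidef)
    (hreg : ∃ lam0 : ℂ, (lam0 • E - L * Q).det ≠ 0) :
    ∃ mu0 : ℂ, (mu0 • E - Q).det ≠ 0 :=
  stmt_9_general E Q L hH hreg
end

section
/- Let E, Q, L ∈ ℂ^{n×n} satisfy EᴴQ = QᴴE with EᴴQ positive semidefinite, let R := −(L + Lᴴ)/2 be positive semidefinite, and assume the pencil P(λ) = λE − LQ is regular (det(λ₀E − LQ) ≠ 0 for some λ₀ ∈ ℂ). Let ω ∈ ℝ with ω ≠ 0. Then: (a) every v ∈ ℂⁿ with (iω E − LQ)v = 0 satisfies RQv = 0; (b) the eigenvalue iω is semisimple, i.e., the multiplicity of iω as a root of the polynomial p(λ) = det(λE − LQ) equals the dimension of ker(iω E − LQ). -/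
/-!
For purely imaginary `λ = iω` and `(λE - LQ)v = 0`, the number `(Qv)ᴴL(Qv) = λ·vᴴEᴴQv` is purely
imaginary, so `(Qv)ᴴR(Qv) = 0` and `RQv = 0`. Then `Qv` is also a left eigenvector, and pairing it
with a Jordan chain `(λE - LQ)w = Ev` forces `EᴴQv = 0`, whence `Qv = 0`, `Ev = 0` and, by
regularity, `v = 0`. So there are no Jordan chains at `iω`.

For the multiplicity, write `A = LQ`, pick `μ` with `G = μE - A` invertible and put `M = G⁻¹E`.
Then `det(zE - A) = det G · det(1 - (μ - z)M)`, so for `μ ≠ λ` the multiplicity of `λ` is that of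
`(μ - λ)⁻¹` as an eigenvalue of `M`, while `ker(λE - A)` is the `(μ - λ)⁻¹`-eigenspace of `M`;
the absence of Jordan chains of the pencil makes that eigenvalue of `M` semisimple.
-/

open Matrix ComplexOrder Polynomial

theorem Polynomial.reverse_pow_of_domain {R : Type*} [Semiring R] [NoZeroDivisors R] (p : R[X])
    (m : ℕ) : (p ^ m).reverse = p.reverse ^ m := by
  induction m with
  | zero => simpa using reverse_C (1 : R)
  | succ m ih => rw [pow_succ, reverse_mul_of_domain, ih, pow_succ]

theorem Polynomial.rootMultiplicity_reverse {K : Type*} [Field K] (p : K[X]) {t : K}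
    (ht : t ≠ 0) : p.reverse.rootMultiplicity t = p.rootMultiplicity t⁻¹ := by
  rcases eq_or_ne p 0 with rfl | hp
  · simp
  obtain ⟨q, hpq, hq⟩ := p.exists_eq_pow_rootMultiplicity_mul_and_not_dvd hp t⁻¹
  set m := p.rootMultiplicity t⁻¹
  have hrev_lin : (X - C t⁻¹).reverse = C (-t⁻¹) * (X - C t) := by
    have hX : (X : K[X]).reverse = 1 := by
      rw [← mul_one X, reverse_X_mul]
      simpa using reverse_C (1 : K)
    rw [sub_eq_add_neg, ← C_neg, reverse_add_C, hX, natDegree_X, pow_one, mul_sub, ← C_mul,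
      neg_mul, inv_mul_cancel₀ ht]
    simp only [C_neg, C_1]
    ring
  have hqt : ¬ q.reverse.IsRoot t := by
    let := invertibleOfNonzero (inv_ne_zero ht)
    have := eval₂_reverse_eq_zero_iff (RingHom.id K) t⁻¹ q
    rw [invOf_eq_inv, inv_inv, eval₂_id, eval₂_id] at this
    rwa [IsRoot.def, this, ← IsRoot.def, ← dvd_iff_isRoot]
  have hne : (X - C t) ^ m * q.reverse ≠ 0 :=
    mul_ne_zero (pow_ne_zero _ (X_sub_C_ne_zero t)) fun h => hqt (by simp [h])
  rw [hpq, reverse_mul_of_domain, reverse_pow_of_domain, hrev_lin, mul_pow, ← C_pow, mul_assoc,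
    rootMultiplicity_mul (mul_ne_zero (by simp [ht]) hne), rootMultiplicity_C,
    rootMultiplicity_mul hne, rootMultiplicity_X_sub_C_pow, rootMultiplicity_eq_zero hqt]
  simp

theorem Module.End.maxGenEigenspace_eq_eigenspace {R M : Type*} [CommRing R] [AddCommGroup M]
    [Module R M] {f : End R M} {μ : R} (h : f.genEigenspace μ 2 ≤ f.eigenspace μ) :
    f.maxGenEigenspace μ = f.eigenspace μ := by
  refine le_antisymm (fun x hx => ?_) eigenspace_le_maxGenEigenspace
  obtain ⟨k, hk⟩ := (mem_maxGenEigenspace f μ x).mp hx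
  clear hx
  induction k generalizing x with
  | zero => simp_all
  | succ k ih =>
    rw [pow_succ, Module.End.mul_apply] at hk
    have hg := ih _ hk
    apply h
    rw [← Nat.cast_ofNat, mem_genEigenspace_nat, LinearMap.mem_ker, pow_two, Module.End.mul_apply]
    rwa [eigenspace_def, LinearMap.mem_ker] at hg

namespace Matrix

theorem star_mulVec_dotProduct {ι α : Type*} [Fintype ι] [CommSemiring α] [StarRing α]
    (A : Matrix ι ι α) (x y : ι → α) :
    star (A *ᵥ x) ⬝ᵥ y = star x ⬝ᵥ (Aᴴ *ᵥ y) := by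
  rw [star_mulVec, dotProduct_mulVec]

section Pencil

variable {ι : Type*} [Fintype ι] [DecidableEq ι]

theorem det_pencil_eq_mul_charpolyRev_comp {R : Type*} [CommRing R]
    {E A M : Matrix ι ι R} {μ : R} (hM : (μ • E - A) * M = E) :
    ((X : R[X]) • E.map C - A.map C).det = C (μ • E - A).det * M.charpolyRev.comp (C μ - X) := by
  have hfac : (X : R[X]) • E.map C - A.map C = (μ • E - A).map C * (1 - (C μ - X) • M.map C) := by
    rw [Matrix.mul_sub, Matrix.mul_one, Matrix.mul_smul, ← Matrix.map_mul, hM]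
    ext i j : 1
    simp only [sub_apply, smul_apply, map_apply, smul_eq_mul, X_mul_C, map_sub, map_mul]
    ring
  have hrev : (1 - (C μ - X) • M.map C).det = M.charpolyRev.comp (C μ - X) := by
    rw [charpolyRev, ← coe_compRingHom_apply, RingHom.map_det]
    congr 1
    ext i j : 1
    by_cases h : i = j <;> simp [h, mul_comm (C μ - X)]
  rw [hfac, det_mul, hrev, RingHom.map_det, RingHom.mapMatrix_apply]

variable {K : Type*} [Field K] {E A M : Matrix ι ι K} {μ lam : K}

theorem rootMultiplicity_det_pencil_eq (hμ : (μ • E - A).det ≠ 0) (hM : (μ • E - A) * M = E) :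
    rootMultiplicity lam ((X : K[X]) • E.map C - A.map C).det =
      rootMultiplicity (μ - lam) M.charpolyRev := by
  have hcomp : (M.charpolyRev.comp (C μ - X)).eval μ = 1 := by simp
  rw [det_pencil_eq_mul_charpolyRev_comp hM,
    rootMultiplicity_mul (mul_ne_zero (by simpa using hμ) (by rintro h; simp [h] at hcomp)),
    rootMultiplicity_C, zero_add, show C μ - X = C (-1) * X + C μ by simp; ring,
    rootMultiplicity_comp_C_mul_X_add_C _ _ _ _ isUnit_one.neg, neg_one_mul, neg_add_eq_sub]

theorem pencil_mulVec_eq (hM : (μ • E - A) * M = E) (ht : μ ≠ lam) (y : ι → K) :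
    (lam • E - A) *ᵥ y =
      (lam - μ) • ((μ • E - A) *ᵥ ((M.mulVecLin - (μ - lam)⁻¹ • 1) y)) := by
  have hc : (lam - μ) * (μ - lam)⁻¹ = -1 := by
    field_simp [sub_ne_zero.mpr ht]
    ring
  have hpencil : lam • E - A = (lam - μ) • ((μ • E - A) * (M - (μ - lam)⁻¹ • 1)) := by
    rw [Matrix.mul_sub, hM, Matrix.mul_smul, Matrix.mul_one, smul_sub, smul_smul, hc]
    module
  rw [hpencil, smul_mulVec, ← mulVec_mulVec]
  simp [sub_mulVec, smul_mulVec]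

theorem ker_pencil_eq_eigenspace (hμ : (μ • E - A).det ≠ 0) (hM : (μ • E - A) * M = E)
    (ht : μ ≠ lam) :
    LinearMap.ker (lam • E - A).mulVecLin = Module.End.eigenspace M.mulVecLin (μ - lam)⁻¹ := by
  ext x
  rw [Module.End.eigenspace_def, LinearMap.mem_ker, LinearMap.mem_ker, mulVecLin_apply,
    pencil_mulVec_eq hM ht, smul_eq_zero, or_iff_right (sub_ne_zero.mpr ht.symm)]
  exact ⟨eq_zero_of_mulVec_eq_zero hμ, fun h => by rw [h, mulVec_zero]⟩

theorem genEigenspace_two_le_eigenspace_of_pencil (hM : (μ • E - A) * M = E) (ht : μ ≠ lam)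
    (hchain : ∀ v w, (lam • E - A) *ᵥ v = 0 → (lam • E - A) *ᵥ w = E *ᵥ v → v = 0) :
    Module.End.genEigenspace M.mulVecLin (μ - lam)⁻¹ 2 ≤
      Module.End.eigenspace M.mulVecLin (μ - lam)⁻¹ := by
  intro x hx
  rw [← Nat.cast_ofNat, Module.End.mem_genEigenspace_nat, LinearMap.mem_ker, pow_two,
    Module.End.mul_apply] at hx
  rw [Module.End.eigenspace_def, LinearMap.mem_ker]
  set g := M.mulVecLin - (μ - lam)⁻¹ • 1
  have hv : (lam • E - A) *ᵥ g x = 0 := by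
    rw [pencil_mulVec_eq hM ht, hx, mulVec_zero, smul_zero]
  have hGE : μ • E - A = (lam • E - A) + (μ - lam) • E := by module
  refine hchain _ (-(μ - lam)⁻¹ ^ 2 • x) hv ?_
  rw [mulVec_smul, pencil_mulVec_eq hM ht, hGE, add_mulVec, hv, zero_add, smul_mulVec,
    smul_smul, smul_smul, show -(μ - lam)⁻¹ ^ 2 * (lam - μ) * (μ - lam) = 1 by
      field_simp [sub_ne_zero.mpr ht]; ring, one_smul]

theorem rootMultiplicity_det_pencil_eq_finrank_ker (hμ : (μ • E - A).det ≠ 0)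
    (hchain : ∀ v w, (lam • E - A) *ᵥ v = 0 → (lam • E - A) *ᵥ w = E *ᵥ v → v = 0) :
    rootMultiplicity lam ((X : K[X]) • E.map C - A.map C).det =
      Module.finrank K (LinearMap.ker (lam • E - A).mulVecLin) := by
  have hM : (μ • E - A) * ((μ • E - A)⁻¹ * E) = E := by
    rw [← Matrix.mul_assoc, mul_nonsing_inv _ hμ.isUnit, Matrix.one_mul]
  rw [rootMultiplicity_det_pencil_eq hμ hM]
  rcases eq_or_ne μ lam with rfl | ht
  · have hinj : LinearMap.ker (μ • E - A).mulVecLin = ⊥ :=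
      ker_mulVecLin_eq_bot_iff.mpr fun v => eq_zero_of_mulVec_eq_zero hμ
    rw [hinj, finrank_bot, sub_self]
    exact rootMultiplicity_eq_zero (by simp)
  rw [← reverse_charpoly, rootMultiplicity_reverse _ (sub_ne_zero.mpr ht), ← charpoly_mulVecLin,
    ← LinearMap.finrank_maxGenEigenspace_eq,
    Module.End.maxGenEigenspace_eq_eigenspace
      (genEigenspace_two_le_eigenspace_of_pencil hM ht hchain),
    ker_pencil_eq_eigenspace hμ hM ht]

end Pencil

end Matrix

namespace PortHamiltonian

variable {ι : Type*} [Fintype ι] {E Q L R : Matrix ι ι ℂ} {lam : ℂ} {v : ι → ℂ}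

theorem star_mulVec_dotProduct_mulVec (hH : Eᴴ * Q = Qᴴ * E) (v : ι → ℂ) :
    star (Q *ᵥ v) ⬝ᵥ (E *ᵥ v) = star v ⬝ᵥ ((Eᴴ * Q) *ᵥ v) := by
  rw [star_mulVec_dotProduct, mulVec_mulVec, hH]

theorem mulVec_mulVec_eq_of_mem_ker (hv : (lam • E - L * Q) *ᵥ v = 0) :
    L *ᵥ (Q *ᵥ v) = lam • (E *ᵥ v) := by
  rwa [sub_mulVec, smul_mulVec, sub_eq_zero, ← mulVec_mulVec, eq_comm] at hv

theorem dissipation_mulVec_eq_zero (hH : Eᴴ * Q = Qᴴ * E) (hpsd : (Eᴴ * Q).PosSemidef)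
    (hR : R = (-(1 / 2) : ℂ) • (L + Lᴴ)) (hRpsd : R.PosSemidef) (hlam : star lam = -lam)
    (hv : (lam • E - L * Q) *ᵥ v = 0) : R *ᵥ (Q *ᵥ v) = 0 := by
  set u := Q *ᵥ v
  set s := star v ⬝ᵥ ((Eᴴ * Q) *ᵥ v)
  have hs : star s = s := Complex.conj_eq_iff_im.mpr (hpsd.dotProduct_mulVec_nonneg v).2.symm
  have hLu : star u ⬝ᵥ (L *ᵥ u) = lam * s := by
    rw [mulVec_mulVec_eq_of_mem_ker hv, dotProduct_smul, star_mulVec_dotProduct_mulVec hH,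
      smul_eq_mul]
  have hLHu : star u ⬝ᵥ (Lᴴ *ᵥ u) = -(lam * s) := by
    rw [← star_mulVec_dotProduct, star_dotProduct, hLu, star_mul', hlam, hs, neg_mul]
  refine (hRpsd.dotProduct_mulVec_zero_iff u).mp ?_
  rw [hR, smul_mulVec, add_mulVec, dotProduct_smul, dotProduct_add, hLu, hLHu, add_neg_cancel,
    smul_zero]

theorem conjTranspose_pencil_mulVec_eq_zero (hH : Eᴴ * Q = Qᴴ * E) (hpsd : (Eᴴ * Q).PosSemidef)
    (hR : R = (-(1 / 2) : ℂ) • (L + Lᴴ)) (hRpsd : R.PosSemidef) (hlam : star lam = -lam)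
    (hv : (lam • E - L * Q) *ᵥ v = 0) : (lam • E - L * Q)ᴴ *ᵥ (Q *ᵥ v) = 0 := by
  have hsum : (L + Lᴴ) *ᵥ (Q *ᵥ v) = 0 := by
    have := dissipation_mulVec_eq_zero hH hpsd hR hRpsd hlam hv
    rwa [hR, smul_mulVec, smul_eq_zero, or_iff_right (by norm_num)] at this
  have hLH : Lᴴ *ᵥ (Q *ᵥ v) = -(lam • (E *ᵥ v)) := by
    rw [← mulVec_mulVec_eq_of_mem_ker hv]
    exact eq_neg_of_add_eq_zero_right (by rwa [add_mulVec] at hsum)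
  rw [conjTranspose_sub, conjTranspose_smul, conjTranspose_mul, sub_mulVec, smul_mulVec,
    ← mulVec_mulVec, hLH, mulVec_neg, mulVec_smul, mulVec_mulVec, mulVec_mulVec, ← hH, hlam]
  module

theorem eq_zero_of_pencil_chain [DecidableEq ι] (hH : Eᴴ * Q = Qᴴ * E) (hpsd : (Eᴴ * Q).PosSemidef)
    (hR : R = (-(1 / 2) : ℂ) • (L + Lᴴ)) (hRpsd : R.PosSemidef) {μ : ℂ}
    (hμ : (μ • E - L * Q).det ≠ 0) (hlam0 : lam ≠ 0) (hlam : star lam = -lam) {w : ι → ℂ}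
    (hv : (lam • E - L * Q) *ᵥ v = 0) (hw : (lam • E - L * Q) *ᵥ w = E *ᵥ v) : v = 0 := by
  have hleft := conjTranspose_pencil_mulVec_eq_zero hH hpsd hR hRpsd hlam hv
  have hEQv : (Eᴴ * Q) *ᵥ v = 0 := by
    refine (hpsd.dotProduct_mulVec_zero_iff v).mp ?_
    rw [← star_mulVec_dotProduct_mulVec hH, ← hw, dotProduct_mulVec,
      ← conjTranspose_conjTranspose (lam • E - L * Q), ← star_mulVec, hleft, star_zero,
      zero_dotProduct]
  have hEu : Eᴴ *ᵥ (Q *ᵥ v) = 0 := by rw [mulVec_mulVec, hEQv]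
  have hLQu : (L * Q)ᴴ *ᵥ (Q *ᵥ v) = 0 := by
    rwa [conjTranspose_sub, conjTranspose_smul, sub_mulVec, smul_mulVec, hEu, smul_zero,
      zero_sub, neg_eq_zero] at hleft
  have hu : Q *ᵥ v = 0 := by
    refine eq_zero_of_mulVec_eq_zero (by rwa [det_conjTranspose, star_ne_zero]) ?_
    rw [conjTranspose_sub, conjTranspose_smul, sub_mulVec, smul_mulVec, hEu, hLQu, smul_zero,
      sub_zero]
  have hEv : E *ᵥ v = 0 := by
    have := mulVec_mulVec_eq_of_mem_ker hv
    rwa [hu, mulVec_zero, eq_comm, smul_eq_zero, or_iff_right hlam0] at this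
  refine eq_zero_of_mulVec_eq_zero hμ ?_
  rw [sub_mulVec, smul_mulVec, hEv, ← mulVec_mulVec, hu, mulVec_zero, smul_zero, sub_zero]

end PortHamiltonian

/-- Theorem 4.3 (ii) in the regular case: nonzero purely imaginary eigenvalues `iω` of
`P(λ) = λE - LQ` are semisimple and any vector in `ker(iωE - LQ)` satisfies `RQv = 0`. -/
theorem stmt_11 {n : ℕ} (E Q L : Matrix (Fin n) (Fin n) ℂ)
    (hH : Eᴴ * Q = Qᴴ * E) (hpsd : (Eᴴ * Q).PosSemidef)
    (R : Matrix (Fin n) (Fin n) ℂ) (hR : R = (-(1 / 2) : ℂ) • (L + Lᴴ))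
    (hRpsd : R.PosSemidef)
    (hreg : ∃ mu0 : ℂ, (mu0 • E - L * Q).det ≠ 0)
    (ω : ℝ) (hω : ω ≠ 0) :
    (∀ v : Fin n → ℂ, ((Complex.I * (ω : ℂ)) • E - L * Q) *ᵥ v = 0 → R *ᵥ (Q *ᵥ v) = 0) ∧
    Polynomial.rootMultiplicity (Complex.I * (ω : ℂ))
        ((Polynomial.X : Polynomial ℂ) • E.map Polynomial.C - (L * Q).map Polynomial.C).det =
      Module.finrank ℂ
        (LinearMap.ker (Matrix.mulVecLin ((Complex.I * (ω : ℂ)) • E - L * Q))) := by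
  obtain ⟨μ, hμ⟩ := hreg
  have hlam : star (Complex.I * ω) = -(Complex.I * ω) := by simp
  have hlam0 : Complex.I * ω ≠ 0 := mul_ne_zero Complex.I_ne_zero (by exact_mod_cast hω)
  exact ⟨fun v hv => PortHamiltonian.dissipation_mulVec_eq_zero hH hpsd hR hRpsd hlam hv,
    rootMultiplicity_det_pencil_eq_finrank_ker hμ fun v w hv hw =>
      PortHamiltonian.eq_zero_of_pencil_chain hH hpsd hR hRpsd hμ hlam0 hlam hv hw⟩
end

section
/- Let E, Q, L ∈ ℂ^{n×n} satisfy EᴴQ = QᴴE with EᴴQ positive semidefinite, let L + Lᴴ be negative semidefinite, and assume the pencil P(λ) = λE − LQ is regular (det(λ₀E − LQ) ≠ 0 for some λ₀ ∈ ℂ). Then the index of P(λ) is at most two, in the following sense: for all vectors x₁, x₂, x₃ ∈ ℂⁿ with Ex₁ = 0, Ex₂ = LQx₁ and Ex₃ = LQx₂, one has x₁ = 0. (For a regular pencil this condition is equivalent to the absence of Jordan chains of length at least three at the eigenvalue ∞.) -/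
/-!
Put `z = Q x₁`. From `EᴴQ = QᴴE` and `E x₁ = 0` we get `Eᴴ z = 0`, so `zᴴ L z = zᴴ E x₂ = 0`, and
semidefiniteness of `L + Lᴴ` forces `Lᴴ z = -L z = -E x₂`. Then
`x₂ᴴ EᴴQ x₂ = -zᴴ L Q x₂ = -zᴴ E x₃ = 0`, so `EᴴQ x₂ = 0` and
`(λ₀E - LQ)ᴴ z = -QᴴLᴴ z = QᴴE x₂ = 0`. Regularity gives `z = 0`, hence `(λ₀E - LQ) x₁ = 0`
and `x₁ = 0`.
-/

open Matrix ComplexOrder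

namespace Matrix

variable {𝕜 m : Type*} [RCLike 𝕜] [Fintype m]

theorem star_dotProduct_mulVec_eq_zero_of_conjTranspose_mulVec_eq_zero {A : Matrix m m 𝕜}
    {z : m → 𝕜} (hz : Aᴴ *ᵥ z = 0) (y : m → 𝕜) : star z ⬝ᵥ A *ᵥ y = 0 := by
  have hzA : star z ᵥ* A = 0 := by
    simpa only [star_mulVec, conjTranspose_conjTranspose, star_zero] using congrArg star hz
  rw [dotProduct_mulVec, hzA, zero_dotProduct]

theorem eq_zero_of_conjTranspose_mulVec_eq_zero [DecidableEq m] {A : Matrix m m 𝕜}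
    (hA : A.det ≠ 0) {z : m → 𝕜} (hz : Aᴴ *ᵥ z = 0) : z = 0 :=
  eq_zero_of_mulVec_eq_zero (by rwa [det_conjTranspose, star_ne_zero]) hz

theorem conjTranspose_mulVec_eq_neg_of_star_dotProduct_eq_zero {L : Matrix m m 𝕜}
    (hL : (-(L + Lᴴ)).PosSemidef) {z : m → 𝕜} (hz : star z ⬝ᵥ L *ᵥ z = 0) :
    Lᴴ *ᵥ z = -(L *ᵥ z) := by
  have hz' : star z ⬝ᵥ Lᴴ *ᵥ z = 0 := by
    rw [dotProduct_mulVec, ← star_mulVec, star_dotProduct, hz, star_zero]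
  have hker : (-(L + Lᴴ)) *ᵥ z = 0 := by
    rw [← hL.dotProduct_mulVec_zero_iff, neg_mulVec, add_mulVec, dotProduct_neg,
      dotProduct_add, hz, hz', add_zero, neg_zero]
  rw [neg_mulVec, add_mulVec, neg_eq_zero] at hker
  exact eq_neg_of_add_eq_zero_right hker

end Matrix

namespace DissipativePencil

variable {𝕜 m : Type*} [RCLike 𝕜] [Fintype m] {E Q L : Matrix m m 𝕜} {x₁ x₂ x₃ : m → 𝕜}

theorem conjTranspose_mulVec_mulVec_eq_zero (hH : Eᴴ * Q = Qᴴ * E) (h₁ : E *ᵥ x₁ = 0) :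
    Eᴴ *ᵥ (Q *ᵥ x₁) = 0 := by
  rw [mulVec_mulVec, hH, ← mulVec_mulVec, h₁, mulVec_zero]

theorem conjTranspose_mulVec_mulVec_eq_neg (hH : Eᴴ * Q = Qᴴ * E) (hL : (-(L + Lᴴ)).PosSemidef)
    (h₁ : E *ᵥ x₁ = 0) (h₂ : E *ᵥ x₂ = (L * Q) *ᵥ x₁) : Lᴴ *ᵥ (Q *ᵥ x₁) = -(E *ᵥ x₂) := by
  have hLz : L *ᵥ (Q *ᵥ x₁) = E *ᵥ x₂ := by rw [mulVec_mulVec, h₂]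
  rw [← hLz]
  refine conjTranspose_mulVec_eq_neg_of_star_dotProduct_eq_zero hL ?_
  rw [hLz]
  exact star_dotProduct_mulVec_eq_zero_of_conjTranspose_mulVec_eq_zero
    (conjTranspose_mulVec_mulVec_eq_zero hH h₁) x₂

theorem conjTranspose_mul_mulVec_eq_zero (hH : Eᴴ * Q = Qᴴ * E) (hpsd : (Eᴴ * Q).PosSemidef)
    (hL : (-(L + Lᴴ)).PosSemidef) (h₁ : E *ᵥ x₁ = 0) (h₂ : E *ᵥ x₂ = (L * Q) *ᵥ x₁)
    (h₃ : E *ᵥ x₃ = (L * Q) *ᵥ x₂) : (Eᴴ * Q) *ᵥ x₂ = 0 := by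
  have hEz := conjTranspose_mulVec_mulVec_eq_zero hH h₁
  have hLz := conjTranspose_mulVec_mulVec_eq_neg hH hL h₁ h₂
  rw [← hpsd.dotProduct_mulVec_zero_iff]
  calc star x₂ ⬝ᵥ (Eᴴ * Q) *ᵥ x₂ = star (E *ᵥ x₂) ⬝ᵥ Q *ᵥ x₂ := by
        rw [← mulVec_mulVec, dotProduct_mulVec, star_mulVec]
    _ = -(star (Q *ᵥ x₁) ⬝ᵥ E *ᵥ x₃) := by
        rw [← neg_neg (E *ᵥ x₂), ← hLz, star_neg, neg_dotProduct, star_mulVec,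
          conjTranspose_conjTranspose, ← dotProduct_mulVec, mulVec_mulVec, h₃]
    _ = 0 := by rw [star_dotProduct_mulVec_eq_zero_of_conjTranspose_mulVec_eq_zero hEz, neg_zero]

theorem conjTranspose_mulVec_eq_zero (hH : Eᴴ * Q = Qᴴ * E)
    (hpsd : (Eᴴ * Q).PosSemidef) (hL : (-(L + Lᴴ)).PosSemidef) (h₁ : E *ᵥ x₁ = 0)
    (h₂ : E *ᵥ x₂ = (L * Q) *ᵥ x₁) (h₃ : E *ᵥ x₃ = (L * Q) *ᵥ x₂) (μ : 𝕜) :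
    (μ • E - L * Q)ᴴ *ᵥ (Q *ᵥ x₁) = 0 := by
  rw [conjTranspose_sub, conjTranspose_smul, conjTranspose_mul, sub_mulVec, smul_mulVec,
    conjTranspose_mulVec_mulVec_eq_zero hH h₁, smul_zero, ← mulVec_mulVec,
    conjTranspose_mulVec_mulVec_eq_neg hH hL h₁ h₂, mulVec_neg, mulVec_mulVec, ← hH,
    conjTranspose_mul_mulVec_eq_zero hH hpsd hL h₁ h₂ h₃, neg_zero, sub_zero]

end DissipativePencil

/-- Theorem 4.3 (iii): under the dissipativity assumptions, the regular pencil
`P(λ) = λE - LQ` has index at most two. -/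
theorem stmt_12 {n : ℕ} (E Q L : Matrix (Fin n) (Fin n) ℂ)
    (hH : Eᴴ * Q = Qᴴ * E) (hpsd : (Eᴴ * Q).PosSemidef)
    (hL : (-(L + Lᴴ)).PosSemidef)
    (hreg : ∃ lam0 : ℂ, (lam0 • E - L * Q).det ≠ 0) :
    ∀ x₁ x₂ x₃ : Fin n → ℂ,
      E *ᵥ x₁ = 0 → E *ᵥ x₂ = (L * Q) *ᵥ x₁ → E *ᵥ x₃ = (L * Q) *ᵥ x₂ → x₁ = 0 := by
  intro x₁ x₂ x₃ h₁ h₂ h₃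
  obtain ⟨μ, hμ⟩ := hreg
  have hQx₁ : Q *ᵥ x₁ = 0 := eq_zero_of_conjTranspose_mulVec_eq_zero hμ
    (DissipativePencil.conjTranspose_mulVec_eq_zero hH hpsd hL h₁ h₂ h₃ μ)
  refine eq_zero_of_mulVec_eq_zero hμ ?_
  rw [sub_mulVec, smul_mulVec, h₁, smul_zero, ← mulVec_mulVec, hQx₁, mulVec_zero, sub_zero]
end

section
/- Let E, Q, L ∈ ℂ^{n×n} satisfy EᴴQ = QᴴE with EᴴQ positive semidefinite, let L + Lᴴ be negative semidefinite, and assume that the pencil λE − Q is regular (det(μ₀E − Q) ≠ 0 for some μ₀ ∈ ℂ). Then all left minimal indices of the pencil P(λ) = λE − LQ are zero, in the following sense: for every μ ∈ ℂ with rank(μE − LQ) ≥ rank(νE − LQ) for all ν ∈ ℂ, every y ∈ ℂⁿ with yᴴ(μE − LQ) = 0 satisfies yᴴE = 0 and yᴴ(LQ) = 0. -/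
/-!
Regularity of `λE - Q` together with `EᴴQ ⪰ 0` forces `E + Q` to be invertible: a kernel
vector `x` would give `xᴴEᴴQx = -‖Ex‖²`, so `Ex = Qx = 0`. With `E + Q` invertible and `EᴴQ`
Hermitian, every solution of `Eᴴy = Qᴴv` has the form `v = Ew`, `y = Qw`. For `y` in the left
kernel of `E - LQ` take `v = Lᴴy`: then `yᴴLy = wᴴEᴴQw ≥ 0`, while `L + Lᴴ ⪯ 0` gives
`Re (yᴴLy) ≤ 0`; hence `EᴴQw = 0`, i.e. `Eᴴy = 0`. So at `λ = 1` the left kernel is the common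
left kernel of `E` and `LQ`. The common kernel lies in every left kernel, and at a value of
maximal rank the left kernel is no larger than at `λ = 1`, so there it is the common kernel too.
-/

open Matrix ComplexOrder

namespace Matrix

section Pencil

variable {m n K : Type*} [Fintype m] [Fintype n] [Field K]

theorem rank_add_finrank_ker_vecMulLinear (M : Matrix m n K) :
    M.rank + Module.finrank K (LinearMap.ker M.vecMulLinear) = Fintype.card m := by
  rw [← rank_transpose, rank, ← mulVecLin_transpose, LinearMap.finrank_range_add_finrank_ker,
    Module.finrank_fintype_fun_eq_card]

theorem vecMul_eq_zero_of_rank_le {E F : Matrix m n K} {ν μ : K}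
    (hν : ∀ z, z ᵥ* (ν • E - F) = 0 → z ᵥ* E = 0)
    (hrank : (ν • E - F).rank ≤ (μ • E - F).rank) {y : m → K} (hy : y ᵥ* (μ • E - F) = 0) :
    y ᵥ* E = 0 ∧ y ᵥ* F = 0 := by
  set common := LinearMap.ker E.vecMulLinear ⊓ LinearMap.ker F.vecMulLinear
  have common_le : common ≤ LinearMap.ker (μ • E - F).vecMulLinear := by
    rintro z ⟨hE, hF⟩
    simp_all
  have le_common : LinearMap.ker (ν • E - F).vecMulLinear ≤ common := by
    intro z hz
    have hE := hν z hz
    simp_all [common]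
  have hdim := Submodule.finrank_mono le_common
  have hnullμ := rank_add_finrank_ker_vecMulLinear (μ • E - F)
  have hnullν := rank_add_finrank_ker_vecMulLinear (ν • E - F)
  have heq := Submodule.eq_of_le_of_finrank_le common_le (by omega)
  have hy' : y ∈ common := heq ▸ hy
  exact hy'

end Pencil

theorem star_dotProduct_conjTranspose_mul_mulVec {m n α : Type*} [Fintype m] [Fintype n]
    [CommSemiring α] [StarRing α] (A B : Matrix m n α) (x : n → α) :
    star x ⬝ᵥ (Aᴴ * B) *ᵥ x = star (A *ᵥ x) ⬝ᵥ B *ᵥ x := by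
  rw [← mulVec_mulVec, dotProduct_mulVec, star_mulVec]

theorem exists_mulVec_eq_of_conjTranspose_mulVec_eq {n K : Type*} [Fintype n] [DecidableEq n]
    [Field K] [StarRing K] {E Q : Matrix n n K} (hH : Eᴴ * Q = Qᴴ * E) (hEQ : IsUnit (E + Q))
    {v y : n → K} (h : Eᴴ *ᵥ y = Qᴴ *ᵥ v) : ∃ w, E *ᵥ w = v ∧ Q *ᵥ w = y := by
  obtain ⟨w, hw⟩ := mulVec_surjective_iff_isUnit.mpr hEQ (y + v)
  have hEw : E *ᵥ w = v := by
    apply mulVec_injective_iff_isUnit.mpr ((isUnit_conjTranspose _).mpr hEQ)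
    calc (E + Q)ᴴ *ᵥ (E *ᵥ w) = Eᴴ *ᵥ ((E + Q) *ᵥ w) := by
          rw [mulVec_mulVec, mulVec_mulVec, conjTranspose_add, add_mul, mul_add, hH]
      _ = (E + Q)ᴴ *ᵥ v := by
          rw [hw, mulVec_add, h, conjTranspose_add, add_mulVec, add_comm]
  refine ⟨w, hEw, add_right_cancel (b := v) ?_⟩
  rw [← hw, add_mulVec, hEw, add_comm]

variable {n : Type*} [Fintype n] [DecidableEq n] {E Q : Matrix n n ℂ}

theorem isUnit_add_of_posSemidef_conjTranspose_mul (hpsd : (Eᴴ * Q).PosSemidef)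
    (hreg : ∃ μ₀ : ℂ, (μ₀ • E - Q).det ≠ 0) : IsUnit (E + Q) := by
  obtain ⟨μ₀, hμ₀⟩ := hreg
  rw [isUnit_iff_isUnit_det, isUnit_iff_ne_zero]
  intro hdet
  obtain ⟨x, hx0, hx⟩ := exists_mulVec_eq_zero_iff.mpr hdet
  have hQx : Q *ᵥ x = -(E *ᵥ x) := by
    rw [add_mulVec] at hx
    exact eq_neg_of_add_eq_zero_right hx
  have hEx : E *ᵥ x = 0 := by
    have h := hpsd.dotProduct_mulVec_nonneg x
    rw [star_dotProduct_conjTranspose_mul_mulVec, hQx, dotProduct_neg, neg_nonneg] at h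
    exact dotProduct_star_self_eq_zero.mp (le_antisymm h (dotProduct_star_self_nonneg _))
  exact hμ₀ (exists_mulVec_eq_zero_iff.mp ⟨x, hx0, by simp [sub_mulVec, smul_mulVec, hEx, hQx]⟩)

theorem conjTranspose_mulVec_eq_zero_of_dissipative {L : Matrix n n ℂ}
    (hpsd : (Eᴴ * Q).PosSemidef) (hL : (-(L + Lᴴ)).PosSemidef) (hEQ : IsUnit (E + Q))
    {y : n → ℂ} (hy : Eᴴ *ᵥ y = Qᴴ *ᵥ (Lᴴ *ᵥ y)) : Eᴴ *ᵥ y = 0 := by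
  have hH : Eᴴ * Q = Qᴴ * E := by
    simpa only [conjTranspose_mul, conjTranspose_conjTranspose] using hpsd.isHermitian.symm
  obtain ⟨w, hEw, hQw⟩ := exists_mulVec_eq_of_conjTranspose_mulVec_eq hH hEQ hy
  set a := star y ⬝ᵥ L *ᵥ y
  have ha : star w ⬝ᵥ (Eᴴ * Q) *ᵥ w = a := by
    rw [star_dotProduct_conjTranspose_mul_mulVec, hEw, hQw, star_mulVec,
      conjTranspose_conjTranspose, ← dotProduct_mulVec]
  have ha_nonneg : 0 ≤ a := ha ▸ hpsd.dotProduct_mulVec_nonneg w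
  have hsum : star y ⬝ᵥ (-(L + Lᴴ)) *ᵥ y = -(a + star a) := by
    rw [neg_mulVec, add_mulVec, dotProduct_neg, dotProduct_add, dotProduct_mulVec _ Lᴴ,
      ← star_mulVec, star_dotProduct (L *ᵥ y) y]
  have ha0 : a = 0 := by
    have h := hL.dotProduct_mulVec_nonneg y
    rw [hsum, (IsSelfAdjoint.of_nonneg ha_nonneg).star_eq, neg_nonneg] at h
    exact le_antisymm ((le_add_of_nonneg_left ha_nonneg).trans h) ha_nonneg
  rw [← hQw, mulVec_mulVec, ← hpsd.dotProduct_mulVec_zero_iff, ha, ha0]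

end Matrix

theorem stmt_13_general {n : ℕ} (E Q L : Matrix (Fin n) (Fin n) ℂ)
    (hpsd : (Eᴴ * Q).PosSemidef)
    (hL : (-(L + Lᴴ)).PosSemidef)
    (hreg : ∃ mu0 : ℂ, (mu0 • E - Q).det ≠ 0) :
    ∀ μ : ℂ, (∀ ν : ℂ, (ν • E - L * Q).rank ≤ (μ • E - L * Q).rank) →
      ∀ y : Fin n → ℂ, star y ᵥ* (μ • E - L * Q) = 0 →
        star y ᵥ* E = 0 ∧ star y ᵥ* (L * Q) = 0 := by
  intro μ hμ y hy
  have hEQ := isUnit_add_of_posSemidef_conjTranspose_mul hpsd hreg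
  refine vecMul_eq_zero_of_rank_le (fun z hz => ?_) (hμ 1) hy
  rw [one_smul, vecMul_sub, sub_eq_zero] at hz
  have hcol := conjTranspose_mulVec_eq_zero_of_dissipative hpsd hL hEQ (y := star z)
    (by simpa [star_vecMul, conjTranspose_mul, mulVec_mulVec] using congrArg star hz)
  simpa [star_mulVec] using congrArg star hcol

/-- Theorem 4.3 (v): if in addition `λE - Q` is regular, all left minimal indices of
`P(λ) = λE - LQ` are zero. -/
theorem stmt_13 {n : ℕ} (E Q L : Matrix (Fin n) (Fin n) ℂ)
    (hH : Eᴴ * Q = Qᴴ * E) (hpsd : (Eᴴ * Q).PosSemidef)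
    (hL : (-(L + Lᴴ)).PosSemidef)
    (hreg : ∃ mu0 : ℂ, (mu0 • E - Q).det ≠ 0) :
    ∀ μ : ℂ, (∀ ν : ℂ, (ν • E - L * Q).rank ≤ (μ • E - L * Q).rank) →
      ∀ y : Fin n → ℂ, star y ᵥ* (μ • E - L * Q) = 0 →
        star y ᵥ* E = 0 ∧ star y ᵥ* (L * Q) = 0 :=
  stmt_13_general E Q L hpsd hL hreg
end

section
/- Let E, A ∈ ℂ^{n×m} and λ₀ ∈ ℂ. Suppose there exist an integer k ≥ 1, invertible matrices Y ∈ ℂ^{n×n} and X ∈ ℂ^{m×m}, matrices R₁, R₀ ∈ ℂ^{k×k} and Ẽ, Ã ∈ ℂ^{(n−k)×(m−k)} such that Y·E·X = diag(R₁, Ẽ) and Y·A·X = diag(R₀, Ã) (block diagonal), det(λR₁ − R₀) = c·(λ − λ₀)^k for some c ≠ 0, and rank(λ₀Ẽ − Ã) ≥ rank(μẼ − Ã) for all μ ∈ ℂ. Let 𝒳 ⊆ ℂ^m be the span of the first k columns of X (a regular deflating subspace of λE − A associated with λ₀). Then 𝒳 intersects trivially the span of all kernels associated with other eigenvalues including ∞: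 𝒳 ∩ span( ker E ∪ ⋃_{λ ∈ ℂ, λ ≠ λ₀} ker(λE − A) ) = {0}. -/
/-!
In the coordinates `w = X⁻¹ v` the deflating subspace consists of the vectors with `w i = 0`
for `i ≥ k`. If `M v = 0` with `M = E`, or `M = μ E - A` and `μ ≠ λ₀`, then `(Y M X) w = 0`.
The leading `k × k` block of `Y M X` is `R₁` resp. `μ R₁ - R₀` and the block to its right
vanishes, so `w i = 0` for `i < k` once that block is invertible. It is:
`det (μ R₁ - R₀) = c (μ - λ₀)ᵏ ≠ 0`, and `det R₁ = c` is the leading coefficient of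
`det (λ R₁ - R₀)`. So every coordinate of a vector in the intersection vanishes.
-/

open Matrix

section Pencil

open Polynomial

variable {R : Type*} [CommRing R] {ι : Type*} [Fintype ι] [DecidableEq ι]

theorem eval_det_pencil (R₁ R₀ : Matrix ι ι R) (μ : R) :
    ((X : R[X]) • R₁.map C - R₀.map C).det.eval μ = (μ • R₁ - R₀).det := by
  rw [← coe_evalRingHom, RingHom.map_det]
  congr 1
  ext i j
  simp
  ring

theorem det_eq_of_det_pencil_eq {R₁ R₀ : Matrix ι ι R} {c a : R}
    (h : ((X : R[X]) • R₁.map C - R₀.map C).det = C c * (X - C a) ^ Fintype.card ι) :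
    R₁.det = c := by
  have hlead := coeff_det_X_add_C_card R₁ (-R₀)
  rw [Matrix.map_neg _ (map_neg C), ← sub_eq_add_neg, h, coeff_C_mul] at hlead
  rw [← hlead, sub_eq_add_neg, ← C_neg, coeff_X_add_C_pow]
  simp

theorem det_pencil_ne_zero [IsDomain R] {R₁ R₀ : Matrix ι ι R} {c a : R} {k : ℕ}
    (h : ((X : R[X]) • R₁.map C - R₀.map C).det = C c * (X - C a) ^ k) (hc : c ≠ 0)
    {μ : R} (hμ : μ ≠ a) : (μ • R₁ - R₀).det ≠ 0 := by
  rw [← eval_det_pencil, h]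
  simp [sub_eq_zero, hc, hμ]

end Pencil

theorem leading_coords_eq_zero_of_mulVec_eq_zero {R : Type*} [CommRing R] [NoZeroDivisors R]
    {n m k : ℕ} (hkn : k ≤ n) (hkm : k ≤ m) {N : Matrix (Fin n) (Fin m) R}
    {B : Matrix (Fin k) (Fin k) R}
    (hleft : ∀ (i j : Fin k) (hi : (i : ℕ) < n) (hj : (j : ℕ) < m), N ⟨i, hi⟩ ⟨j, hj⟩ = B i j)
    (hright : ∀ (i : Fin n) (j : Fin m), (i : ℕ) < k → k ≤ (j : ℕ) → N i j = 0)
    (hB : B.det ≠ 0) {w : Fin m → R} (hw : N *ᵥ w = 0) (j : Fin m) (hj : (j : ℕ) < k) :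
    w j = 0 := by
  have hBw : B *ᵥ (w ∘ Fin.castLE hkm) = 0 := by
    ext i
    have hrow := congrFun hw (Fin.castLE hkn i)
    refine (Fintype.sum_of_injective (Fin.castLE hkm) (Fin.castLE_injective hkm) _
      (fun j => N (Fin.castLE hkn i) j * w j) (fun j hj => ?_) fun j => ?_).trans hrow
    · have hkj : k ≤ (j : ℕ) := by
        by_contra! hlt
        exact hj ⟨⟨j, hlt⟩, rfl⟩
      rw [hright _ j i.2 hkj, zero_mul]
    · exact congrArg (· * _) (hleft i j (Fin.castLE hkn i).2 (Fin.castLE hkm j).2).symm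
  simpa using congrFun (eq_zero_of_mulVec_eq_zero hB hBw) ⟨j, hj⟩

section CoordsVanishing

variable {K : Type*} [Field K] {ι : Type*} [Fintype ι] [DecidableEq ι]

def coordsVanishingOn (P : Matrix ι ι K) (S : Set ι) : Submodule K (ι → K) :=
  (Submodule.pi S fun _ => ⊥).comap (toLin' P)

theorem mem_coordsVanishingOn {P : Matrix ι ι K} {S : Set ι} {v : ι → K} :
    v ∈ coordsVanishingOn P S ↔ ∀ i ∈ S, (P *ᵥ v) i = 0 := by
  simp [coordsVanishingOn, Submodule.mem_pi]

theorem coordsVanishingOn_compl_inf {P : Matrix ι ι K} (hP : IsUnit P) (S : Set ι) :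
    coordsVanishingOn P Sᶜ ⊓ coordsVanishingOn P S = ⊥ := by
  refine eq_bot_iff.2 fun v hv => (Submodule.mem_bot K).2 ?_
  obtain ⟨hSc, hS⟩ := Submodule.mem_inf.1 hv
  rw [mem_coordsVanishingOn] at hS hSc
  have hPv : P *ᵥ v = 0 := funext fun i => by
    by_cases hi : i ∈ S
    · exact hS i hi
    · exact hSc i hi
  exact (mulVec_injective_iff_isUnit.2 hP) (hPv.trans (mulVec_zero P).symm)

theorem col_mem_coordsVanishingOn_inv {X : Matrix ι ι K} (hX : IsUnit X) {S : Set ι} {j : ι}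
    (hj : j ∈ S) : (fun i => X i j) ∈ coordsVanishingOn X⁻¹ Sᶜ := by
  rw [mem_coordsVanishingOn]
  intro i hi
  have hcol : (fun i => X i j) = X *ᵥ Pi.single j 1 := (mulVec_single_one X j).symm
  rw [hcol, mulVec_mulVec, nonsing_inv_mul X ((isUnit_iff_isUnit_det X).1 hX), one_mulVec]
  exact Pi.single_eq_of_ne (by rintro rfl; exact hi hj) 1

end CoordsVanishing

theorem mem_coordsVanishingOn_of_mulVec_eq_zero {K : Type*} [Field K] {n m k : ℕ}
    (hkn : k ≤ n) (hkm : k ≤ m) {M : Matrix (Fin n) (Fin m) K} {Y : Matrix (Fin n) (Fin n) K}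
    {X : Matrix (Fin m) (Fin m) K} {B : Matrix (Fin k) (Fin k) K} (hX : IsUnit X)
    (hleft : ∀ (i j : Fin k) (hi : (i : ℕ) < n) (hj : (j : ℕ) < m),
      (Y * M * X) ⟨i, hi⟩ ⟨j, hj⟩ = B i j)
    (hright : ∀ (i : Fin n) (j : Fin m), (i : ℕ) < k → k ≤ (j : ℕ) → (Y * M * X) i j = 0)
    (hB : B.det ≠ 0) {v : Fin m → K} (hv : M *ᵥ v = 0) :
    v ∈ coordsVanishingOn X⁻¹ {i | (i : ℕ) < k} := by
  have hw : (Y * M * X) *ᵥ (X⁻¹ *ᵥ v) = 0 := by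
    rw [mulVec_mulVec, Matrix.mul_assoc, Matrix.mul_assoc,
      mul_nonsing_inv X ((isUnit_iff_isUnit_det X).1 hX), Matrix.mul_one, ← mulVec_mulVec, hv,
      mulVec_zero]
  exact mem_coordsVanishingOn.2 fun i hi =>
    leading_coords_eq_zero_of_mulVec_eq_zero hkn hkm hleft hright hB hw i hi

theorem stmt_14_general {n m : ℕ} (E A : Matrix (Fin n) (Fin m) ℂ) (lam0 : ℂ)
    (k : ℕ) (hkn : k ≤ n) (hkm : k ≤ m)
    (Y : Matrix (Fin n) (Fin n) ℂ) (X : Matrix (Fin m) (Fin m) ℂ)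
    (hX : IsUnit X)
    (R1 R0 : Matrix (Fin k) (Fin k) ℂ)
    -- block diagonal structure of Y (λE - A) X
    (h11 : ∀ (i j : Fin k) (hi : (i : ℕ) < n) (hj : (j : ℕ) < m),
      (Y * E * X) ⟨(i : ℕ), hi⟩ ⟨(j : ℕ), hj⟩ = R1 i j ∧
      (Y * A * X) ⟨(i : ℕ), hi⟩ ⟨(j : ℕ), hj⟩ = R0 i j)
    (h12 : ∀ (i : Fin n) (j : Fin m), (i : ℕ) < k → k ≤ (j : ℕ) →
      (Y * E * X) i j = 0 ∧ (Y * A * X) i j = 0)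
    -- λR1 - R0 is regular with λ₀ as its only eigenvalue
    (hdet : ∃ c : ℂ, c ≠ 0 ∧
      ((Polynomial.X : Polynomial ℂ) • R1.map Polynomial.C - R0.map Polynomial.C).det =
        Polynomial.C c * (Polynomial.X - Polynomial.C lam0) ^ k) :
    Submodule.span ℂ {v : Fin m → ℂ | ∃ j : Fin m, (j : ℕ) < k ∧ v = fun i => X i j} ⊓
      Submodule.span ℂ ({x : Fin m → ℂ | E *ᵥ x = 0} ∪
        ⋃ (μ : ℂ) (_ : μ ≠ lam0), {x : Fin m → ℂ | (μ • E - A) *ᵥ x = 0}) = ⊥ := by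
  obtain ⟨c, hc, hdet⟩ := hdet
  have hR1 : R1.det ≠ 0 := det_eq_of_det_pencil_eq (by rwa [Fintype.card_fin]) ▸ hc
  refine eq_bot_iff.2 ((inf_le_inf ?_ ?_).trans
    (coordsVanishingOn_compl_inf (isUnit_nonsing_inv_iff.2 hX) {i : Fin m | (i : ℕ) < k}).le)
  · rw [Submodule.span_le]
    rintro _ ⟨j, hj, rfl⟩
    exact col_mem_coordsVanishingOn_inv hX (S := {i : Fin m | (i : ℕ) < k}) hj
  · rw [Submodule.span_le]
    rintro v (hv | hv)
    · exact mem_coordsVanishingOn_of_mulVec_eq_zero hkn hkm hX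
        (fun i j hi hj => (h11 i j hi hj).1) (fun i j hi hj => (h12 i j hi hj).1) hR1 hv
    · obtain ⟨μ, hμ, hv⟩ := Set.mem_iUnion₂.1 hv
      refine mem_coordsVanishingOn_of_mulVec_eq_zero hkn hkm (Y := Y) hX ?_ ?_
        (det_pencil_ne_zero hdet hc hμ) hv
      · intro i j hi hj
        simp [Matrix.mul_sub, Matrix.sub_mul, (h11 i j hi hj).1, (h11 i j hi hj).2]
      · intro i j hi hj
        simp [Matrix.mul_sub, Matrix.sub_mul, (h12 i j hi hj).1, (h12 i j hi hj).2]

/-- Lemma 2.3: a regular deflating subspace associated with the eigenvalue `λ₀` intersects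
trivially the span of the kernels associated with all other eigenvalues (including `∞`,
whose kernel is `ker E`). -/
theorem stmt_14 {n m : ℕ} (E A : Matrix (Fin n) (Fin m) ℂ) (lam0 : ℂ)
    (k : ℕ) (hk : 1 ≤ k) (hkn : k ≤ n) (hkm : k ≤ m)
    (Y : Matrix (Fin n) (Fin n) ℂ) (X : Matrix (Fin m) (Fin m) ℂ)
    (hY : IsUnit Y) (hX : IsUnit X)
    (R1 R0 : Matrix (Fin k) (Fin k) ℂ)
    (Et At : Matrix (Fin (n - k)) (Fin (m - k)) ℂ)
    -- block diagonal structure of Y (λE - A) X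
    (h11 : ∀ (i j : Fin k) (hi : (i : ℕ) < n) (hj : (j : ℕ) < m),
      (Y * E * X) ⟨(i : ℕ), hi⟩ ⟨(j : ℕ), hj⟩ = R1 i j ∧
      (Y * A * X) ⟨(i : ℕ), hi⟩ ⟨(j : ℕ), hj⟩ = R0 i j)
    (h12 : ∀ (i : Fin n) (j : Fin m), (i : ℕ) < k → k ≤ (j : ℕ) →
      (Y * E * X) i j = 0 ∧ (Y * A * X) i j = 0)
    (h21 : ∀ (i : Fin n) (j : Fin m), k ≤ (i : ℕ) → (j : ℕ) < k →
      (Y * E * X) i j = 0 ∧ (Y * A * X) i j = 0)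
    (h22 : ∀ (i : Fin (n - k)) (j : Fin (m - k)) (hi : k + (i : ℕ) < n) (hj : k + (j : ℕ) < m),
      (Y * E * X) ⟨k + (i : ℕ), hi⟩ ⟨k + (j : ℕ), hj⟩ = Et i j ∧
      (Y * A * X) ⟨k + (i : ℕ), hi⟩ ⟨k + (j : ℕ), hj⟩ = At i j)
    -- λR1 - R0 is regular with λ₀ as its only eigenvalue
    (hdet : ∃ c : ℂ, c ≠ 0 ∧
      ((Polynomial.X : Polynomial ℂ) • R1.map Polynomial.C - R0.map Polynomial.C).det =
        Polynomial.C c * (Polynomial.X - Polynomial.C lam0) ^ k)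
    -- λ₀ is not an eigenvalue of λẼ - Ã
    (hrank : ∀ μ : ℂ, (μ • Et - At).rank ≤ (lam0 • Et - At).rank) :
    Submodule.span ℂ {v : Fin m → ℂ | ∃ j : Fin m, (j : ℕ) < k ∧ v = fun i => X i j} ⊓
      Submodule.span ℂ ({x : Fin m → ℂ | E *ᵥ x = 0} ∪
        ⋃ (μ : ℂ) (_ : μ ≠ lam0), {x : Fin m → ℂ | (μ • E - A) *ᵥ x = 0}) = ⊥ :=
  stmt_14_general E A lam0 k hkn hkm Y X hX R1 R0 h11 h12 hdet
end

section
/- Let M, D, K ∈ ℂ^{n×n} be Hermitian positive semidefinite matrices and consider the quadratic matrix polynomial S(λ) = λ²M + λD + K. Then all eigenvalues of S lie in the closed left half-plane: for every λ₀ ∈ ℂ with Re(λ₀) > 0 and every μ ∈ ℂ, rank(μ²M + μD + K) ≤ rank(λ₀²M + λ₀D + K) (i.e., λ₀ is not an eigenvalue of S). -/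
open Matrix ComplexOrder

/-! If `S(λ₀) x = 0` with `Re λ₀ > 0`, then `λ₀² m + λ₀ d + k = 0` for the nonnegative reals
`m = xᴴMx`, `d = xᴴDx`, `k = xᴴKx`, which forces `m = d = k = 0`. Semidefiniteness then gives
`Mx = Dx = Kx = 0`, so `ker S(λ₀) ⊆ ker S(μ)` for every `μ`, and rank–nullity compares the ranks. -/

theorem Matrix.rank_le_rank_of_ker_le {m n K : Type*} [Fintype n] [Field K]
    {A B : Matrix m n K} (h : LinearMap.ker A.mulVecLin ≤ LinearMap.ker B.mulVecLin) :
    B.rank ≤ A.rank := by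
  have hA := LinearMap.finrank_range_add_finrank_ker A.mulVecLin
  have hB := LinearMap.finrank_range_add_finrank_ker B.mulVecLin
  have hker := Submodule.finrank_mono h
  rw [Matrix.rank, Matrix.rank]
  omega

/-- Multiplying by `conj z` turns the real part of the equation into
`z.re * |z|² * a + |z|² * b + z.re * c = 0`, a sum of nonnegative terms. -/
theorem Complex.eq_zero_of_sq_mul_add_mul_add_eq_zero {a b c : ℝ} (ha : 0 ≤ a) (hb : 0 ≤ b)
    (hc : 0 ≤ c) {z : ℂ} (hz : 0 < z.re) (h : z ^ 2 * a + z * b + c = 0) :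
    a = 0 ∧ b = 0 ∧ c = 0 := by
  have hre := congrArg Complex.re h
  have him := congrArg Complex.im h
  simp only [pow_two, Complex.add_re, Complex.add_im, Complex.mul_re, Complex.mul_im,
    Complex.ofReal_re, Complex.ofReal_im, Complex.zero_re, Complex.zero_im] at hre him
  set x := z.re
  set y := z.im
  have hnorm : 0 < x ^ 2 + y ^ 2 := by positivity
  have key : x * (x ^ 2 + y ^ 2) * a + (x ^ 2 + y ^ 2) * b + x * c = 0 := by
    linear_combination x * hre + y * him
  have t1 : 0 ≤ x * (x ^ 2 + y ^ 2) * a := by positivity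
  have t2 : 0 ≤ (x ^ 2 + y ^ 2) * b := by positivity
  have t3 : 0 ≤ x * c := by positivity
  refine ⟨?_, ?_, ?_⟩
  · have : x * (x ^ 2 + y ^ 2) * a = 0 := by linarith
    simpa [hz.ne', hnorm.ne'] using this
  · have : (x ^ 2 + y ^ 2) * b = 0 := by linarith
    simpa [hnorm.ne'] using this
  · have : x * c = 0 := by linarith
    simpa [hz.ne'] using this

namespace Matrix.PosSemidef

variable {n : Type*} [Fintype n] {A : Matrix n n ℂ}

theorem dotProduct_mulVec_eq_ofReal (hA : A.PosSemidef) (x : n → ℂ) :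
    star x ⬝ᵥ A *ᵥ x = ((star x ⬝ᵥ A *ᵥ x).re : ℂ) :=
  Complex.eq_re_of_ofReal_le (r := 0) (by exact_mod_cast hA.dotProduct_mulVec_nonneg x)

theorem dotProduct_mulVec_re_nonneg (hA : A.PosSemidef) (x : n → ℂ) :
    0 ≤ (star x ⬝ᵥ A *ᵥ x).re :=
  (Complex.nonneg_iff.mp (hA.dotProduct_mulVec_nonneg x)).1

theorem mulVec_eq_zero_of_dotProduct_mulVec_re_eq_zero (hA : A.PosSemidef) {x : n → ℂ}
    (h : (star x ⬝ᵥ A *ᵥ x).re = 0) : A *ᵥ x = 0 :=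
  (hA.dotProduct_mulVec_zero_iff x).mp <| by
    rw [hA.dotProduct_mulVec_eq_ofReal, h, Complex.ofReal_zero]

theorem mulVec_eq_zero_of_quadratic_mulVec_eq_zero {M D K : Matrix n n ℂ} (hM : M.PosSemidef)
    (hD : D.PosSemidef) (hK : K.PosSemidef) {z : ℂ} (hz : 0 < z.re) {x : n → ℂ}
    (hx : (z ^ 2 • M + z • D + K) *ᵥ x = 0) :
    M *ᵥ x = 0 ∧ D *ᵥ x = 0 ∧ K *ᵥ x = 0 := by
  have hquad : z ^ 2 * (star x ⬝ᵥ M *ᵥ x) + z * (star x ⬝ᵥ D *ᵥ x) + star x ⬝ᵥ K *ᵥ x = 0 := by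
    simpa only [add_mulVec, smul_mulVec, dotProduct_add, dotProduct_smul, smul_eq_mul,
      dotProduct_zero] using congrArg (star x ⬝ᵥ ·) hx
  rw [hM.dotProduct_mulVec_eq_ofReal, hD.dotProduct_mulVec_eq_ofReal,
    hK.dotProduct_mulVec_eq_ofReal] at hquad
  obtain ⟨hMx, hDx, hKx⟩ := Complex.eq_zero_of_sq_mul_add_mul_add_eq_zero
    (hM.dotProduct_mulVec_re_nonneg x) (hD.dotProduct_mulVec_re_nonneg x)
    (hK.dotProduct_mulVec_re_nonneg x) hz hquad
  exact ⟨hM.mulVec_eq_zero_of_dotProduct_mulVec_re_eq_zero hMx,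
    hD.mulVec_eq_zero_of_dotProduct_mulVec_re_eq_zero hDx,
    hK.mulVec_eq_zero_of_dotProduct_mulVec_re_eq_zero hKx⟩

end Matrix.PosSemidef

/-- Corollary 4.9 (i), first part: all eigenvalues of `S(λ) = λ²M + λD + K` with
`M, D, K ⪰ 0` lie in the closed left half-plane. -/
theorem stmt_15 {n : ℕ} (M D K : Matrix (Fin n) (Fin n) ℂ)
    (hM : M.PosSemidef) (hD : D.PosSemidef) (hK : K.PosSemidef) :
    ∀ lam0 : ℂ, 0 < lam0.re →
      ∀ μ : ℂ, (μ ^ 2 • M + μ • D + K).rank ≤ (lam0 ^ 2 • M + lam0 • D + K).rank := by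
  intro lam0 hlam0 μ
  refine Matrix.rank_le_rank_of_ker_le fun x hx => ?_
  obtain ⟨hMx, hDx, hKx⟩ :=
    hM.mulVec_eq_zero_of_quadratic_mulVec_eq_zero hD hK hlam0 (LinearMap.mem_ker.mp hx)
  simp [hMx, hDx, hKx]
end

section
/- Let M, D, K ∈ ℂ^{n×n} be Hermitian positive semidefinite matrices such that the polynomial p(λ) = det(λ²M + λD + K) is not identically zero. Then every nonzero purely imaginary eigenvalue of S(λ) = λ²M + λD + K is semisimple: for every ω ∈ ℝ with ω ≠ 0, the multiplicity of iω as a root of p equals the dimension of ker(−ω²M + iωD + K). -/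
/-!
For a regular matrix polynomial `S` and a point `a`, pick an invertible `P` whose columns
`pⱼ, j ∈ s,` form a basis of `ker S(a)`. Those columns of `S(X) P` vanish at `a`; dividing them by
`X - a` gives `det S · det P = det U · (X - a)^|s|`, where `U(a)` has columns `S'(a) pⱼ` for
`j ∈ s` and `S(a) pⱼ` otherwise. If `S` has no Jordan chain of length two at `a`
(`S(a)x = 0`, `S'(a)x + S(a)y = 0` force `x = 0`), then `U(a)` is nonsingular, so the multiplicity
of `a` is `|s| = dim ker S(a)`.

For `S(λ) = λ²M + λD + K` with `M, D, K ⪰ 0` and `a = iω`, `ω ≠ 0`: if `S(iω)x = 0`, the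
imaginary part of `xᴴS(iω)x` is `ω·xᴴDx`, so `Dx = 0`. Then `S(iω)ᴴx = 0` as well, so pairing
`S'(iω)x + S(iω)y = 0` with `x` leaves `2iω·xᴴMx = 0`. Hence `Mx = 0`, then `Kx = 0`, and
regularity of `S` forces `x = 0`.
-/

open Matrix ComplexOrder Polynomial Module

section ColumnFactorization

variable {ι R : Type*} [DecidableEq ι] [CommRing R]

noncomputable def Matrix.divXSubCCols (T : Matrix ι ι R[X]) (a : R) (s : Finset ι) :
    Matrix ι ι R[X] :=
  of fun i j => if j ∈ s then T i j /ₘ (X - C a) else T i j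

theorem Matrix.det_eq_det_divXSubCCols_mul_pow [Fintype ι] {T : Matrix ι ι R[X]} {a : R}
    {s : Finset ι} (hT : ∀ i, ∀ j ∈ s, (T i j).IsRoot a) :
    T.det = (T.divXSubCCols a s).det * (X - C a) ^ s.card := by
  have hfact : T = T.divXSubCCols a s * diagonal fun j => if j ∈ s then X - C a else 1 := by
    ext i j
    rw [mul_diagonal, divXSubCCols, of_apply]
    split_ifs with hj
    · rw [mul_comm, mul_divByMonic_eq_iff_isRoot.mpr (hT i j hj)]
    · rw [mul_one]
  conv_lhs => rw [hfact]
  rw [det_mul, det_diagonal, Finset.prod_ite_mem, Finset.univ_inter, Finset.prod_const]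

theorem Matrix.eval_divXSubCCols (T : Matrix ι ι R[X]) (a : R) (s : Finset ι) (i j : ι) :
    (T.divXSubCCols a s i j).eval a =
      if j ∈ s then (T i j).derivative.eval a else (T i j).eval a := by
  rw [divXSubCCols, of_apply]
  split_ifs
  · simpa using congrArg (eval a)
      (divByMonic_add_X_sub_C_mul_derivative_divByMonic_eq_derivative (T i j) a)
  · rfl

end ColumnFactorization

theorem Module.Basis.sumExtend_inl {ι K V : Type*} [Field K] [AddCommGroup V] [Module K V]
    {v : ι → V} (hv : LinearIndependent K v) (i : ι) : Basis.sumExtend hv (Sum.inl i) = v i := by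
  rw [Basis.sumExtend, Basis.reindex_apply, Basis.coe_extend]
  rfl

theorem Module.Basis.exists_basis_span_image_eq {ι K V : Type*} [Fintype ι] [Field K]
    [AddCommGroup V] [Module K V] (b₀ : Basis ι K V) (W : Submodule K V) :
    ∃ (b : Basis ι K V) (s : Finset ι), Submodule.span K (b '' s) = W := by
  have := Module.Finite.of_basis b₀
  let w := finBasis K W
  have hw : LinearIndependent K (W.subtype ∘ w) :=
    w.linearIndependent.map' W.subtype W.ker_subtype
  let b := Basis.sumExtend hw
  let e := b.indexEquiv b₀
  refine ⟨b.reindex e, Finset.univ.map (Function.Embedding.inl.trans e.toEmbedding), ?_⟩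
  have himage : b.reindex e '' ↑(Finset.univ.map (Function.Embedding.inl.trans e.toEmbedding)) =
      Set.range (W.subtype ∘ w) := by
    rw [Finset.coe_map, Finset.coe_univ, ← Set.image_comp, Set.image_univ]
    congr 1
    ext i
    rw [Function.comp_apply, Basis.reindex_apply]
    exact (congrArg b (e.symm_apply_apply _)).trans (Basis.sumExtend_inl hw i)
  rw [himage, Set.range_comp, Submodule.span_image, w.span_eq, Submodule.map_top,
    W.range_subtype]

theorem Polynomial.rootMultiplicity_eq_of_mul_C_eq {R : Type*} [CommRing R] [IsDomain R]
    {p q : R[X]} {a c : R} {k : ℕ} (hp : p ≠ 0) (hc : c ≠ 0) (hq : ¬q.IsRoot a)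
    (h : p * C c = q * (X - C a) ^ k) : p.rootMultiplicity a = k := by
  have hpc : p * C c ≠ 0 := mul_ne_zero hp (C_ne_zero.mpr hc)
  have hq0 : q ≠ 0 := by
    rintro rfl
    exact hq eval_zero
  have hmul := rootMultiplicity_mul (x := a) hpc
  rw [rootMultiplicity_C, add_zero, h, rootMultiplicity_mul_X_sub_C_pow hq0,
    rootMultiplicity_eq_zero hq, zero_add] at hmul
  exact hmul.symm

section JordanChains

variable {ι K : Type*} [Fintype ι] [DecidableEq ι] [Field K]

theorem Matrix.det_ne_zero_of_no_jordanChain {A B : Matrix ι ι K} (b : Basis ι K (ι → K))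
    {s : Finset ι} (hs : Submodule.span K (b '' s) = LinearMap.ker A.mulVecLin)
    (hchain : ∀ x y, A *ᵥ x = 0 → B *ᵥ x + A *ᵥ y = 0 → x = 0) :
    (of fun i j => if j ∈ s then (B *ᵥ b j) i else (A *ᵥ b j) i).det ≠ 0 := by
  intro hdet
  obtain ⟨c, hc0, hc⟩ := exists_mulVec_eq_zero_iff.mpr hdet
  set x := ∑ j ∈ s, c j • b j
  set y := ∑ j ∈ sᶜ, c j • b j
  have hxy : B *ᵥ x + A *ᵥ y = 0 := by
    rw [← hc]
    ext i
    simp only [x, y, mulVec_sum, mulVec_smul, Pi.add_apply, Finset.sum_apply, Pi.smul_apply,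
      smul_eq_mul, mulVec, dotProduct, of_apply]
    rw [← Finset.sum_add_sum_compl s]
    congr 1 <;> refine Finset.sum_congr rfl fun j hj => ?_
    · rw [if_pos hj, mul_comm]
    · rw [if_neg (Finset.mem_compl.mp hj), mul_comm]
  have hx : x ∈ LinearMap.ker A.mulVecLin := hs ▸ Submodule.sum_mem _ fun j hj =>
    Submodule.smul_mem _ _ (Submodule.subset_span (Set.mem_image_of_mem b hj))
  have hx0 : x = 0 := hchain x y hx hxy
  have hy : y ∈ LinearMap.ker A.mulVecLin := by
    rwa [hx0, mulVec_zero, zero_add] at hxy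
  have hy' : y ∈ Submodule.span K (b '' ↑sᶜ) := Submodule.sum_mem _ fun j hj =>
    Submodule.smul_mem _ _ (Submodule.subset_span (Set.mem_image_of_mem b hj))
  have hy0 : y = 0 := by
    rw [← hs] at hy
    refine Submodule.disjoint_def.mp (b.linearIndependent.disjoint_span_image ?_) y hy hy'
    rw [Finset.coe_compl]
    exact disjoint_compl_right
  refine hc0 (funext (Fintype.linearIndependent_iff.mp b.linearIndependent c ?_))
  rw [← Finset.sum_add_sum_compl s]
  change x + y = 0
  rw [hx0, hy0, add_zero]


theorem Matrix.rootMultiplicity_det_eq_finrank_ker {S : Matrix ι ι K[X]} (hS : S.det ≠ 0)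
    {a : K} (hchain : ∀ x y : ι → K, S.map (eval a) *ᵥ x = 0 →
      (S.map derivative).map (eval a) *ᵥ x + S.map (eval a) *ᵥ y = 0 → x = 0) :
    S.det.rootMultiplicity a = finrank K (LinearMap.ker (S.map (eval a)).mulVecLin) := by
  obtain ⟨b, s, hs⟩ :=
    (Pi.basisFun K ι).exists_basis_span_image_eq (LinearMap.ker (S.map (eval a)).mulVecLin)
  set P : Matrix ι ι K := (of b)ᵀ
  set T := S * P.map C
  have hT : ∀ i j, (T i j).eval a = (S.map (eval a) *ᵥ b j) i := by
    intro i j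
    simp [T, P, mul_apply, mulVec, dotProduct, eval_finsetSum]
  have hT' : ∀ i j, (T i j).derivative.eval a = ((S.map derivative).map (eval a) *ᵥ b j) i := by
    intro i j
    simp [T, P, mul_apply, mulVec, dotProduct, eval_finsetSum]
  have hroot : ∀ i, ∀ j ∈ s, (T i j).IsRoot a := by
    intro i j hj
    have hbj : b j ∈ LinearMap.ker (S.map (eval a)).mulVecLin :=
      hs ▸ Submodule.subset_span (Set.mem_image_of_mem b hj)
    rw [IsRoot, hT, ← mulVecLin_apply, LinearMap.mem_ker.mp hbj, Pi.zero_apply]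
  have hU : ¬(T.divXSubCCols a s).det.IsRoot a := by
    rw [IsRoot, ← coe_evalRingHom, RingHom.map_det]
    convert det_ne_zero_of_no_jordanChain b hs hchain using 3
    ext i j
    rw [RingHom.mapMatrix_apply, map_apply, coe_evalRingHom, eval_divXSubCCols, hT, hT', of_apply]
  have hP : P.det ≠ 0 := by
    rw [det_transpose, ← isUnit_iff_ne_zero, ← isUnit_iff_isUnit_det]
    exact linearIndependent_rows_iff_isUnit.mp b.linearIndependent
  have hdet : S.det * C P.det = (T.divXSubCCols a s).det * (X - C a) ^ s.card := by
    rw [← det_eq_det_divXSubCCols_mul_pow hroot, det_mul, RingHom.map_det]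
    rfl
  have hcard : s.card = finrank K (LinearMap.ker (S.map (eval a)).mulVecLin) := by
    classical
    rw [← hs, ← Finset.coe_image, finrank_span_finset_eq_card,
      Finset.card_image_of_injective _ b.injective]
    rw [Finset.coe_image]
    exact (b.linearIndepOn _).id_image
  rw [← hcard]
  exact rootMultiplicity_eq_of_mul_C_eq hS hP hU hdet

end JordanChains

section QuadraticPencil

variable {ι R : Type*} [CommRing R]

noncomputable def Matrix.quadraticPencil (M D K : Matrix ι ι R) : Matrix ι ι R[X] :=
  (X ^ 2 : R[X]) • M.map C + (X : R[X]) • D.map C + K.map C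

variable (M D K : Matrix ι ι R)

theorem Matrix.map_eval_quadraticPencil (μ : R) :
    (quadraticPencil M D K).map (eval μ) = μ ^ 2 • M + μ • D + K := by
  ext i j
  simp only [quadraticPencil, map_apply, add_apply, smul_apply, smul_eq_mul, X_pow_mul_C, X_mul_C,
    eval_add, eval_mul, eval_C, eval_pow, eval_X]
  ring

theorem Matrix.map_eval_map_derivative_quadraticPencil (μ : R) :
    ((quadraticPencil M D K).map derivative).map (eval μ) = (2 * μ) • M + D := by
  ext i j
  simp only [quadraticPencil, map_apply, add_apply, smul_apply, smul_eq_mul, X_pow_mul_C, X_mul_C,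
    derivative_mul, derivative_C, zero_mul, derivative_X_pow_succ, Nat.cast_one,
    map_add, map_one, pow_one, zero_add, derivative_X, mul_one, add_zero, eval_add, eval_mul,
    eval_C, eval_one, eval_X]
  ring

variable {M D K}

theorem Matrix.eq_zero_of_det_quadraticPencil_ne_zero [Fintype ι] [DecidableEq ι] [IsDomain R]
    (h : (quadraticPencil M D K).det ≠ 0) {x : ι → R} (hM : M *ᵥ x = 0) (hD : D *ᵥ x = 0)
    (hK : K *ᵥ x = 0) : x = 0 := by
  by_contra hx
  refine h (exists_mulVec_eq_zero_iff.mp ⟨C ∘ x, ?_, ?_⟩)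
  · exact fun h0 => hx (funext fun i => C_eq_zero.mp (congrFun h0 i))
  · have hmap : ∀ A : Matrix ι ι R, A.map C *ᵥ (C ∘ x) = C ∘ (A *ᵥ x) := fun A =>
      funext fun i => (RingHom.map_mulVec C A x i).symm
    ext i
    simp [quadraticPencil, add_mulVec, smul_mulVec, hmap, hM, hD, hK]

end QuadraticPencil

section ImaginaryAxis

variable {ι : Type*} [Fintype ι] {M D K : Matrix ι ι ℂ} {ω : ℝ}

theorem Matrix.mulVec_eq_zero_of_imaginary_quadratic_mulVec_eq_zero (hM : M.IsHermitian)
    (hD : D.PosSemidef) (hK : K.IsHermitian) (hω : ω ≠ 0) {x : ι → ℂ}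
    (hx : ((Complex.I * ω) ^ 2 • M + (Complex.I * ω) • D + K) *ᵥ x = 0) : D *ᵥ x = 0 := by
  have him := congrArg (fun v => (star x ⬝ᵥ v).im) hx
  have hMim := hM.im_star_dotProduct_mulVec_self x
  have hDim := hD.1.im_star_dotProduct_mulVec_self x
  have hKim := hK.im_star_dotProduct_mulVec_self x
  simp only [RCLike.im_to_complex] at hMim hDim hKim
  simp only [add_mulVec, smul_mulVec, dotProduct_add, dotProduct_smul, smul_eq_mul,
    Complex.add_im, Complex.mul_im, hMim, hDim, hKim] at him
  have hre : (star x ⬝ᵥ D *ᵥ x).re = 0 := by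
    simpa [mul_pow, ← Complex.ofReal_pow, hω] using him
  rw [← hD.dotProduct_mulVec_zero_iff]
  exact Complex.ext hre hDim

theorem Matrix.eq_zero_of_jordanChain_imaginary (hM : M.PosSemidef) (hD : D.PosSemidef)
    (hK : K.IsHermitian) (hreg : ∀ x, M *ᵥ x = 0 → D *ᵥ x = 0 → K *ᵥ x = 0 → x = 0)
    (hω : ω ≠ 0) {x y : ι → ℂ}
    (hx : ((Complex.I * ω) ^ 2 • M + (Complex.I * ω) • D + K) *ᵥ x = 0)
    (hxy : ((2 * (Complex.I * ω)) • M + D) *ᵥ x +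
      ((Complex.I * ω) ^ 2 • M + (Complex.I * ω) • D + K) *ᵥ y = 0) : x = 0 := by
  set S := (Complex.I * ω) ^ 2 • M + (Complex.I * ω) • D + K
  have hDx : D *ᵥ x = 0 := mulVec_eq_zero_of_imaginary_quadratic_mulVec_eq_zero hM.1 hD hK hω hx
  have hSx : (Complex.I * ω) ^ 2 • M *ᵥ x + K *ᵥ x = 0 := by
    simpa [S, add_mulVec, smul_mulVec, hDx] using hx
  -- `Sᴴ = S(-iω)`, which agrees with `S(iω)` on `ker D`.
  have hSHx : Sᴴ *ᵥ x = 0 := by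
    have hstar : star (Complex.I * ω) = -(Complex.I * ω) := by simp
    rw [conjTranspose_add, conjTranspose_add, conjTranspose_smul, conjTranspose_smul, hM.1.eq,
      hD.1.eq, hK.eq, star_pow, hstar, neg_sq, add_mulVec, add_mulVec, smul_mulVec, smul_mulVec,
      hDx, smul_zero, add_zero, hSx]
  have hxS : star x ᵥ* S = 0 := by
    rw [← conjTranspose_conjTranspose S, ← star_mulVec, hSHx, star_zero]
  have hxMx : star x ⬝ᵥ M *ᵥ x = 0 := by
    have h := congrArg (star x ⬝ᵥ ·) hxy
    simp only [dotProduct_add, dotProduct_mulVec (star x) S, hxS, zero_dotProduct, add_mulVec,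
      smul_mulVec, dotProduct_smul, hDx, dotProduct_zero, add_zero, smul_eq_mul] at h
    exact (mul_eq_zero.mp h).resolve_left (by simp [hω])
  have hMx : M *ᵥ x = 0 := (hM.dotProduct_mulVec_zero_iff x).mp hxMx
  have hKx : K *ᵥ x = 0 := by rwa [hMx, smul_zero, zero_add] at hSx
  exact hreg x hMx hDx hKx

end ImaginaryAxis

/-- Corollary 4.9 (i), second part: for a regular quadratic polynomial
`S(λ) = λ²M + λD + K` with `M, D, K ⪰ 0`, every nonzero purely imaginary eigenvalue `iω`
is semisimple. -/
theorem stmt_16 {n : ℕ} (M D K : Matrix (Fin n) (Fin n) ℂ)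
    (hM : M.PosSemidef) (hD : D.PosSemidef) (hK : K.PosSemidef)
    (hp : ((Polynomial.X ^ 2 : Polynomial ℂ) • M.map Polynomial.C +
        (Polynomial.X : Polynomial ℂ) • D.map Polynomial.C + K.map Polynomial.C).det ≠ 0) :
    ∀ ω : ℝ, ω ≠ 0 →
      Polynomial.rootMultiplicity (Complex.I * (ω : ℂ))
          ((Polynomial.X ^ 2 : Polynomial ℂ) • M.map Polynomial.C +
            (Polynomial.X : Polynomial ℂ) • D.map Polynomial.C + K.map Polynomial.C).det =
        Module.finrank ℂ (LinearMap.ker (Matrix.mulVecLin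
          ((Complex.I * (ω : ℂ)) ^ 2 • M + (Complex.I * (ω : ℂ)) • D + K))) := by
  intro ω hω
  have hreg : ∀ x, M *ᵥ x = 0 → D *ᵥ x = 0 → K *ᵥ x = 0 → x = 0 := fun _ =>
    eq_zero_of_det_quadraticPencil_ne_zero hp
  have hchain : ∀ x y : Fin n → ℂ,
      (quadraticPencil M D K).map (eval (Complex.I * ω)) *ᵥ x = 0 →
      ((quadraticPencil M D K).map derivative).map (eval (Complex.I * ω)) *ᵥ x +
        (quadraticPencil M D K).map (eval (Complex.I * ω)) *ᵥ y = 0 → x = 0 := by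
    rw [map_eval_quadraticPencil, map_eval_map_derivative_quadraticPencil]
    exact fun x y => eq_zero_of_jordanChain_imaginary hM hD hK.1 hreg hω
  rw [← map_eval_quadraticPencil M D K]
  exact rootMultiplicity_det_eq_finrank_ker hp hchain
end

section
/- Let A, E ∈ ℂ^{n×n} and assume there exists an invertible matrix Q ∈ ℂ^{n×n} such that EᴴQ is Hermitian positive semidefinite and QᴴA + AᴴQ is negative semidefinite. Then: (a) every eigenvalue of the pencil λE − A lies in the closed left half-plane, i.e., for every λ₀ ∈ ℂ with Re(λ₀) > 0 and every μ ∈ ℂ, rank(μE − A) ≤ rank(λ₀E − A); (b) if moreover the pencil λE − A is regular (det(λ₁E − A) ≠ 0 for some λ₁ ∈ ℂ), then for every ω ∈ ℝ with ω ≠ 0 the multiplicity of iω as a root of the polynomial det(λE − A) equals dim ker(iωE − A) (purely imaginary nonzero eigenvalues are semisimple). -/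
/-!
If `A x = λ E x`, then `xᴴ (QᴴA + AᴴQ) x = 2 Re λ · xᴴ EᴴQ x`, where the left side is `≤ 0` and
`xᴴ EᴴQ x ≥ 0`. So `Re λ > 0` forces `EᴴQ x = 0`, hence `E x = A x = 0`: the kernel of `λE - A`
is contained in that of every `μE - A`, and its rank is maximal.

If `Re λ = 0`, the Lyapunov form vanishes on eigenvectors, which makes `Q y` a left null vector of
`λE - A` whenever `y` is a right one. Pairing a Jordan chain `(λE - A) x = E y` with `Q y` gives
`yᴴ EᴴQ y = 0`, so `E y = 0`: there are no Jordan chains. For a regular pencil, `μ = 1` is not an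
eigenvalue, and with `M = (μE - A)⁻¹ E` one has `det (λE - A) = det (μE - A) · det (1 - (μ - λ) M)`.
The multiplicity of `λ` as a root of this is the algebraic multiplicity of `(μ - λ)⁻¹` as an
eigenvalue of `M`, which equals the geometric one, `dim ker (λE - A)`, as `M` has no Jordan chains
at `(μ - λ)⁻¹` either.
-/

namespace Polynomial

variable {K : Type*} [Field K]

theorem reverse_X_sub_C {b : K} (hb : b ≠ 0) : (X - C b).reverse = C (-b) * (X - C b⁻¹) := by
  rw [sub_eq_add_neg, ← C_neg, reverse_add_C]
  have h1 : (1 : K[X]).reverse = 1 := by simpa using reverse_C (1 : K)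
  have hX : (X : K[X]).reverse = 1 := by simpa [h1] using reverse_X_mul (1 : K[X])
  simp [hX, mul_sub, ← C_mul, hb]
  abel

theorem reverse_pow (p : K[X]) (k : ℕ) : (p ^ k).reverse = p.reverse ^ k := by
  induction k with
  | zero => simpa using reverse_C (1 : K)
  | succ k ih => rw [pow_succ, reverse_mul_of_domain, ih, pow_succ]

theorem rootMultiplicity_reverse_s17 (p : K[X]) {a : K} (ha : a ≠ 0) :
    p.reverse.rootMultiplicity a = p.rootMultiplicity a⁻¹ := by
  rcases eq_or_ne p 0 with rfl | hp
  · simp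
  obtain ⟨u, hpu, hu⟩ := p.exists_eq_pow_rootMultiplicity_mul_and_not_dvd hp a⁻¹
  set k := p.rootMultiplicity a⁻¹
  have hua : ¬ u.reverse.IsRoot a := by
    have : Invertible a⁻¹ := invertibleOfNonzero (inv_ne_zero ha)
    have h := eval₂_reverse_eq_zero_iff (RingHom.id K) a⁻¹ u
    rw [invOf_eq_inv, inv_inv] at h
    exact fun hr => hu (dvd_iff_isRoot.mpr (h.mp hr))
  have hX : (X - C a) ^ k * u.reverse ≠ 0 :=
    mul_ne_zero (pow_ne_zero _ (X_sub_C_ne_zero a)) fun h => hua (by simp [h])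
  rw [hpu, reverse_mul_of_domain, reverse_pow, reverse_X_sub_C (inv_ne_zero ha), inv_inv, mul_pow,
    mul_assoc, ← C_pow, rootMultiplicity_mul (mul_ne_zero (by simp [ha]) hX), rootMultiplicity_C,
    rootMultiplicity_mul hX, rootMultiplicity_X_sub_C_pow, rootMultiplicity_eq_zero hua, zero_add,
    add_zero]

end Polynomial

namespace Module.End

variable {R M : Type*} [CommRing R] [AddCommGroup M] [Module R M]

theorem maxGenEigenspace_eq_eigenspace_s17 {f : End R M} {μ : R}
    (h : ∀ x, (f - μ • 1) ((f - μ • 1) x) = 0 → (f - μ • 1) x = 0) :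
    f.maxGenEigenspace μ = f.eigenspace μ := by
  refine le_antisymm (fun x hx => ?_) eigenspace_le_maxGenEigenspace
  rw [mem_maxGenEigenspace] at hx
  obtain ⟨k, hk⟩ := hx
  rw [eigenspace_def, LinearMap.mem_ker]
  induction k generalizing x with
  | zero => simp_all
  | succ k ih => exact h x (ih _ (by rwa [pow_succ, mul_apply] at hk))

end Module.End

namespace Matrix

theorem rank_le_rank_of_ker_le_s17 {K m n : Type*} [Field K] [Fintype n] {B C : Matrix m n K}
    (h : LinearMap.ker B.mulVecLin ≤ LinearMap.ker C.mulVecLin) : C.rank ≤ B.rank := by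
  have hB := LinearMap.finrank_range_add_finrank_ker B.mulVecLin
  have hC := LinearMap.finrank_range_add_finrank_ker C.mulVecLin
  have := Submodule.finrank_mono h
  rw [rank, rank]
  omega

section Pencil

open Polynomial

variable {K ι : Type*} [Field K] [Fintype ι] [DecidableEq ι] {E A : Matrix ι ι K} {z₀ z₁ : K}

theorem eq_zero_of_mulVec_eq_zero_of_det_ne_zero (hdet : (z₁ • E - A).det ≠ 0) {x : ι → K}
    (hE : E *ᵥ x = 0) (hA : A *ᵥ x = 0) : x = 0 := by
  by_contra hx
  exact hdet (exists_mulVec_eq_zero_iff.mp ⟨x, hx, by simp [sub_mulVec, smul_mulVec, hE, hA]⟩)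

theorem det_X_smul_sub_eq (hdet : (z₁ • E - A).det ≠ 0) :
    ((X : K[X]) • E.map C - A.map C).det =
      C (z₁ • E - A).det * ((z₁ • E - A)⁻¹ * E).charpolyRev.comp (C z₁ - X) := by
  set D := z₁ • E - A
  set M := D⁻¹ * E
  have hM : D * M = E := mul_nonsing_inv_cancel_left _ _ hdet.isUnit
  have hfactor : (X : K[X]) • E.map C - A.map C = D.map C * (1 - (C z₁ - X) • M.map C) := by
    rw [Matrix.mul_sub, Matrix.mul_one, Matrix.mul_smul, ← Matrix.map_mul, hM]
    ext i j
    simp [D]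
    ring
  have hcomp : M.charpolyRev.comp (C z₁ - X) = (1 - (C z₁ - X) • M.map C).det := by
    rw [charpolyRev, ← coe_compRingHom_apply, RingHom.map_det]
    congr 1
    refine Matrix.ext fun i j => ?_
    by_cases h : i = j <;> simp [h] <;> ring
  rw [hfactor, det_mul, hcomp, RingHom.map_det]
  rfl

theorem smul_sub_eq_smul_mul_sub {M : Matrix ι ι K} (hM : (z₁ • E - A) * M = E)
    (hne : z₀ ≠ z₁) : z₀ • E - A = (z₀ - z₁) • ((z₁ • E - A) * (M - (z₁ - z₀)⁻¹ • 1)) := by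
  have h : (z₀ - z₁) * (z₁ - z₀)⁻¹ = -1 := by
    rw [← neg_sub, neg_mul, mul_inv_cancel₀ (sub_ne_zero.mpr hne.symm)]
  rw [Matrix.mul_sub, hM, Matrix.mul_smul, Matrix.mul_one, smul_sub, smul_smul, h]
  module

theorem ker_pencil_eq_eigenspace_s17 (hdet : (z₁ • E - A).det ≠ 0) (hne : z₀ ≠ z₁) :
    LinearMap.ker (z₀ • E - A).mulVecLin =
      Module.End.eigenspace (toLin' ((z₁ • E - A)⁻¹ * E)) (z₁ - z₀)⁻¹ := by
  have hD : IsUnit (z₁ • E - A) := (isUnit_iff_isUnit_det _).mpr hdet.isUnit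
  ext x
  rw [LinearMap.mem_ker, mulVecLin_apply, Module.End.mem_eigenspace_iff, toLin'_apply,
    smul_sub_eq_smul_mul_sub (mul_nonsing_inv_cancel_left _ _ hdet.isUnit) hne, smul_mulVec,
    ← mulVec_mulVec, smul_eq_zero, or_iff_right (sub_ne_zero.mpr hne),
    (mulVec_injective_iff_isUnit.mpr hD).eq_iff' (mulVec_zero _), sub_mulVec, sub_eq_zero,
    smul_mulVec, one_mulVec]

theorem toLin'_sub_smul_one_apply_eq_zero_of_no_jordan_chain (hdet : (z₁ • E - A).det ≠ 0)
    (hne : z₀ ≠ z₁)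
    (hchain : ∀ x y, (z₀ • E - A) *ᵥ y = 0 → (z₀ • E - A) *ᵥ x = E *ᵥ y → E *ᵥ y = 0)
    {x : ι → K} (hx : (toLin' ((z₁ • E - A)⁻¹ * E) - (z₁ - z₀)⁻¹ • 1)
      ((toLin' ((z₁ • E - A)⁻¹ * E) - (z₁ - z₀)⁻¹ • 1) x) = 0) :
    (toLin' ((z₁ • E - A)⁻¹ * E) - (z₁ - z₀)⁻¹ • 1) x = 0 := by
  have hpencil := smul_sub_eq_smul_mul_sub (mul_nonsing_inv_cancel_left _ _ hdet.isUnit) hne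
  set D := z₁ • E - A with hD
  set N := D⁻¹ * E - (z₁ - z₀)⁻¹ • 1
  have hN : toLin' (D⁻¹ * E) - (z₁ - z₀)⁻¹ • 1 = toLin' N := by
    rw [map_sub, map_smul, toLin'_one]
    rfl
  simp only [hN, toLin'_apply] at hx ⊢
  set y := N *ᵥ x
  have hy : (z₀ • E - A) *ᵥ y = 0 := by
    rw [hpencil, smul_mulVec, ← mulVec_mulVec, hx, mulVec_zero, smul_zero]
  have hAy : A *ᵥ y = z₀ • E *ᵥ y := by
    rwa [sub_mulVec, smul_mulVec, sub_eq_zero, eq_comm] at hy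
  set c := (z₀ - z₁) * (z₁ - z₀)
  have hc : c ≠ 0 := mul_ne_zero (sub_ne_zero.mpr hne) (sub_ne_zero.mpr hne.symm)
  have hxy : (z₀ • E - A) *ᵥ x = c • E *ᵥ y := by
    rw [hpencil, smul_mulVec, ← mulVec_mulVec, hD, sub_mulVec, smul_mulVec, hAy, ← sub_smul,
      smul_smul]
  have hEy : E *ᵥ y = 0 :=
    hchain (c⁻¹ • x) y hy (by rw [mulVec_smul, hxy, smul_smul, inv_mul_cancel₀ hc, one_smul])
  exact eq_zero_of_mulVec_eq_zero_of_det_ne_zero hdet hEy (by rw [hAy, hEy, smul_zero])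

theorem rootMultiplicity_det_eq_finrank_ker_s17 (hdet : (z₁ • E - A).det ≠ 0) (hne : z₀ ≠ z₁)
    (hchain : ∀ x y, (z₀ • E - A) *ᵥ y = 0 → (z₀ • E - A) *ᵥ x = E *ᵥ y → E *ᵥ y = 0) :
    ((X : K[X]) • E.map C - A.map C).det.rootMultiplicity z₀ =
      Module.finrank K (LinearMap.ker (z₀ • E - A).mulVecLin) := by
  set M := (z₁ • E - A)⁻¹ * E
  have hrev : M.charpolyRev.comp (C z₁ - X) ≠ 0 := fun h => by
    simpa using congrArg (eval z₁) h
  rw [det_X_smul_sub_eq hdet, rootMultiplicity_mul (mul_ne_zero (C_ne_zero.mpr hdet) hrev),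
    rootMultiplicity_C, zero_add, show (C z₁ - X : K[X]) = C (-1) * X + C z₁ by simp; ring,
    rootMultiplicity_comp_C_mul_X_add_C _ _ _ _ isUnit_one.neg,
    show -1 * z₀ + z₁ = z₁ - z₀ by ring, ← reverse_charpoly,
    rootMultiplicity_reverse_s17 _ (sub_ne_zero.mpr hne.symm), ← charpoly_toLin',
    ← LinearMap.finrank_maxGenEigenspace_eq, Module.End.maxGenEigenspace_eq_eigenspace_s17
      fun _ => toLin'_sub_smul_one_apply_eq_zero_of_no_jordan_chain hdet hne hchain,
    ker_pencil_eq_eigenspace_s17 hdet hne]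

end Pencil

section Lyapunov

open scoped ComplexOrder

variable {ι : Type*} [Fintype ι] {A E Q : Matrix ι ι ℂ}

theorem conjTranspose_mul_eq_of_posSemidef (hpsd : (Eᴴ * Q).PosSemidef) : Qᴴ * E = Eᴴ * Q := by
  simpa using hpsd.1.eq

theorem mulVec_eq_zero_of_dotProduct_eq_zero [DecidableEq ι] (hQ : IsUnit Q)
    (hpsd : (Eᴴ * Q).PosSemidef) {x : ι → ℂ} (hx : star x ⬝ᵥ ((Eᴴ * Q) *ᵥ x) = 0) :
    E *ᵥ x = 0 := by
  have h := (hpsd.dotProduct_mulVec_zero_iff x).mp hx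
  rw [← conjTranspose_mul_eq_of_posSemidef hpsd, ← mulVec_mulVec] at h
  exact (mulVec_injective_iff_isUnit.mpr ((isUnit_conjTranspose Q).mpr hQ)).eq_iff'
    (mulVec_zero _) |>.mp h

theorem dotProduct_lyapunov_mulVec (hpsd : (Eᴴ * Q).PosSemidef) {z : ℂ} {x : ι → ℂ}
    (hx : A *ᵥ x = z • E *ᵥ x) :
    star x ⬝ᵥ ((Qᴴ * A + Aᴴ * Q) *ᵥ x) = (2 * z.re : ℝ) * (star x ⬝ᵥ ((Eᴴ * Q) *ᵥ x)) := by
  have hQA : star x ⬝ᵥ ((Qᴴ * A) *ᵥ x) = z * (star x ⬝ᵥ ((Eᴴ * Q) *ᵥ x)) := by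
    rw [← mulVec_mulVec, hx, mulVec_smul, dotProduct_smul, mulVec_mulVec,
      conjTranspose_mul_eq_of_posSemidef hpsd, smul_eq_mul]
  have hAQ : star x ⬝ᵥ ((Aᴴ * Q) *ᵥ x) = star z * (star x ⬝ᵥ ((Eᴴ * Q) *ᵥ x)) := by
    rw [← mulVec_mulVec, dotProduct_mulVec, ← star_mulVec, hx, star_smul, smul_dotProduct,
      star_mulVec, ← dotProduct_mulVec, mulVec_mulVec, smul_eq_mul]
  rw [add_mulVec, dotProduct_add, hQA, hAQ, ← add_mul, Complex.star_def, Complex.add_conj]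

theorem mulVec_eq_zero_of_re_pos [DecidableEq ι] (hQ : IsUnit Q) (hpsd : (Eᴴ * Q).PosSemidef)
    (hnsd : (-(Qᴴ * A + Aᴴ * Q)).PosSemidef) {z : ℂ} (hz : 0 < z.re) {x : ι → ℂ}
    (hx : (z • E - A) *ᵥ x = 0) : E *ᵥ x = 0 ∧ A *ᵥ x = 0 := by
  have hAx : A *ᵥ x = z • E *ᵥ x := by
    rwa [sub_mulVec, smul_mulVec, sub_eq_zero, eq_comm] at hx
  have hform := hnsd.dotProduct_mulVec_nonneg x
  rw [neg_mulVec, dotProduct_neg, dotProduct_lyapunov_mulVec hpsd hAx, neg_nonneg] at hform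
  have hc : (0 : ℂ) < (2 * z.re : ℝ) := Complex.zero_lt_real.mpr (by positivity)
  have hEx : E *ᵥ x = 0 := mulVec_eq_zero_of_dotProduct_eq_zero hQ hpsd <|
    le_antisymm (le_of_mul_le_mul_left (by rwa [mul_zero]) hc) (hpsd.dotProduct_mulVec_nonneg x)
  exact ⟨hEx, by rw [hAx, hEx, smul_zero]⟩

theorem lyapunov_mulVec_eq_zero_of_re_eq_zero (hpsd : (Eᴴ * Q).PosSemidef)
    (hnsd : (-(Qᴴ * A + Aᴴ * Q)).PosSemidef) {z : ℂ} (hz : z.re = 0) {x : ι → ℂ}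
    (hx : (z • E - A) *ᵥ x = 0) : (Qᴴ * A + Aᴴ * Q) *ᵥ x = 0 := by
  have hAx : A *ᵥ x = z • E *ᵥ x := by
    rwa [sub_mulVec, smul_mulVec, sub_eq_zero, eq_comm] at hx
  have h := (hnsd.dotProduct_mulVec_zero_iff x).mp <| by
    rw [neg_mulVec, dotProduct_neg, dotProduct_lyapunov_mulVec hpsd hAx, hz]
    simp
  rwa [neg_mulVec, neg_eq_zero] at h

theorem mulVec_eq_zero_of_jordan_chain [DecidableEq ι] (hQ : IsUnit Q)
    (hpsd : (Eᴴ * Q).PosSemidef) (hnsd : (-(Qᴴ * A + Aᴴ * Q)).PosSemidef) {z : ℂ}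
    (hz : z.re = 0) {x y : ι → ℂ} (hy : (z • E - A) *ᵥ y = 0) (hx : (z • E - A) *ᵥ x = E *ᵥ y) :
    E *ᵥ y = 0 := by
  have hQE := conjTranspose_mul_eq_of_posSemidef hpsd
  have hAy : A *ᵥ y = z • E *ᵥ y := by
    rwa [sub_mulVec, smul_mulVec, sub_eq_zero, eq_comm] at hy
  have hQA : (Qᴴ * A) *ᵥ y = z • (Eᴴ * Q) *ᵥ y := by
    rw [← mulVec_mulVec, hAy, mulVec_smul, mulVec_mulVec, hQE]
  have hAQ : (Aᴴ * Q) *ᵥ y = -(z • (Eᴴ * Q) *ᵥ y) := by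
    rw [← hQA, eq_neg_iff_add_eq_zero, add_comm, ← add_mulVec,
      lyapunov_mulVec_eq_zero_of_re_eq_zero hpsd hnsd hz hy]
  have hstar : star z = -z := Complex.ext (by simp [hz]) (by simp)
  have hleft : (z • E - A)ᴴ *ᵥ (Q *ᵥ y) = 0 := by
    rw [conjTranspose_sub, conjTranspose_smul, sub_mulVec, smul_mulVec, mulVec_mulVec,
      mulVec_mulVec, hAQ, hstar]
    simp
  apply mulVec_eq_zero_of_dotProduct_eq_zero hQ hpsd
  rw [← hQE, ← mulVec_mulVec, dotProduct_mulVec, ← star_mulVec, ← hx, dotProduct_mulVec,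
    ← conjTranspose_conjTranspose (z • E - A), ← star_mulVec, hleft, star_zero, zero_dotProduct]

theorem det_ne_zero_of_re_pos [DecidableEq ι] (hQ : IsUnit Q) (hpsd : (Eᴴ * Q).PosSemidef)
    (hnsd : (-(Qᴴ * A + Aᴴ * Q)).PosSemidef) (hreg : ∃ z₁ : ℂ, (z₁ • E - A).det ≠ 0) {z : ℂ}
    (hz : 0 < z.re) : (z • E - A).det ≠ 0 := by
  obtain ⟨z₁, hdet⟩ := hreg
  intro h
  obtain ⟨x, hx0, hx⟩ := exists_mulVec_eq_zero_iff.mpr h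
  obtain ⟨hE, hA⟩ := mulVec_eq_zero_of_re_pos hQ hpsd hnsd hz hx
  exact hx0 (eq_zero_of_mulVec_eq_zero_of_det_ne_zero hdet hE hA)

end Lyapunov

end Matrix

open Matrix ComplexOrder

/-- Corollary 4.11 (generalized Lyapunov stability criterion): if `EᴴQ ⪰ 0` and
`QᴴA + AᴴQ ⪯ 0` for some invertible `Q`, then all eigenvalues of `λE - A` lie in the
closed left half-plane, and in the regular case the nonzero purely imaginary eigenvalues
are semisimple. -/
theorem stmt_17 {n : ℕ} (A E : Matrix (Fin n) (Fin n) ℂ)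
    (Q : Matrix (Fin n) (Fin n) ℂ) (hQ : IsUnit Q)
    (hpsd : (Eᴴ * Q).PosSemidef)
    (hnsd : (-(Qᴴ * A + Aᴴ * Q)).PosSemidef) :
    (∀ lam0 : ℂ, 0 < lam0.re →
      ∀ μ : ℂ, (μ • E - A).rank ≤ (lam0 • E - A).rank) ∧
    ((∃ lam1 : ℂ, (lam1 • E - A).det ≠ 0) →
      ∀ ω : ℝ, ω ≠ 0 →
        Polynomial.rootMultiplicity (Complex.I * (ω : ℂ))
            ((Polynomial.X : Polynomial ℂ) • E.map Polynomial.C - A.map Polynomial.C).det =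
          Module.finrank ℂ
            (LinearMap.ker (Matrix.mulVecLin ((Complex.I * (ω : ℂ)) • E - A)))) := by
  refine ⟨fun lam0 hre μ => rank_le_rank_of_ker_le_s17 fun x hx => ?_, fun hreg ω _ => ?_⟩
  · rw [LinearMap.mem_ker, mulVecLin_apply] at hx ⊢
    obtain ⟨hE, hA⟩ := mulVec_eq_zero_of_re_pos hQ hpsd hnsd hre hx
    simp [sub_mulVec, smul_mulVec, hE, hA]
  · have hre : (Complex.I * ω).re = 0 := by simp
    have hne : Complex.I * ω ≠ 1 := fun h => by simp [h] at hre
    exact rootMultiplicity_det_eq_finrank_ker_s17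
      (det_ne_zero_of_re_pos hQ hpsd hnsd hreg (z := 1) one_pos) hne
      fun x y hy hx => mulVec_eq_zero_of_jordan_chain hQ hpsd hnsd hre hy hx
end

section
/- Let B ∈ ℂ^{k×k} and D ∈ ℂ^{m×m} be Hermitian positive semidefinite and let C ∈ ℂ^{m×k} be such that the block matrix [[B, Cᴴ], [C, D]] ∈ ℂ^{(k+m)×(k+m)} is positive semidefinite. Let Y ∈ ℂ^{m×k} with Y ≠ 0 and range(Yᴴ) ⊆ range(B). Let B^{1/2} denote the positive semidefinite square root of B, let G ∈ ℂ^{k×m} be any matrix with B^{1/2}·G = Yᴴ, set α := ‖G·(D + ‖Y‖·I_m)^{−1/2}‖, where ‖·‖ denotes the spectral (L²-operator) norm and (D + ‖Y‖·I_m)^{−1/2} is the inverse of the positive definite square root of D + ‖Y‖·I_m, and set W := (α² + 2α)·(D + ‖Y‖·I_m) + ‖Y‖·I_m. Then the block matrix [[B, (C + Y)ᴴ], [C + Y, D + W]] is positive semidefinite. -/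
open Matrix ComplexOrder

/-- The spectral (L²-operator) norm of a complex matrix. -/
noncomputable def specNorm {p q : ℕ} (M : Matrix (Fin p) (Fin q) ℂ) : ℝ :=
  ‖LinearMap.toContinuousLinearMap (Matrix.toEuclideanLin M)‖

/-!
For `v = (x, y)` put `a = ‖B^{1/2} x‖`, `d = ‖(D + ‖Y‖ I)^{1/2} y‖` and `e = (yᴴ D y)^{1/2} ≤ d`.
Cauchy–Schwarz for the semi-inner product defined by the positive semidefinite block matrix gives
`Re yᴴ C x ≥ -a e`, and `Y = Gᴴ B^{1/2}` gives `Re yᴴ Y x ≥ -‖G y‖ a ≥ -α d a`.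
As `yᴴ (D + W) y = (1 + α)² d²`, the quadratic form at `v` is at least
`a² - 2 a e - 2 α d a + (1 + α)² d² = (a - e - α d)² + (d - e) (d + e + 2 α d) ≥ 0`.
-/

open WithLp RCLike
open scoped Matrix.Norms.L2Operator

namespace Matrix

variable {𝕜 : Type*} [RCLike 𝕜] {l m n : Type*} [Fintype l] [Fintype m] [Fintype n]

lemma star_mulVec_dotProduct_mulVec_s19 (M : Matrix l m 𝕜) (N : Matrix l n 𝕜) (v : m → 𝕜)
    (w : n → 𝕜) : star (M *ᵥ v) ⬝ᵥ N *ᵥ w = star v ⬝ᵥ (Mᴴ * N) *ᵥ w := by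
  rw [star_mulVec, dotProduct_mulVec, dotProduct_mulVec, vecMul_vecMul]

lemma neg_norm_mul_norm_le_re_star_dotProduct (u w : n → 𝕜) :
    -(‖toLp 2 u‖ * ‖toLp 2 w‖) ≤ re (star u ⬝ᵥ w) := by
  have h := (abs_re_le_norm _).trans (norm_inner_le_norm (𝕜 := 𝕜) (toLp 2 u) (toLp 2 w))
  rw [EuclideanSpace.inner_toLp_toLp, dotProduct_comm] at h
  exact neg_le_of_abs_le h

lemma re_star_dotProduct_mulVec_of_mul_self {S M : Matrix n n 𝕜} (hS : S.IsHermitian)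
    (hSM : S * S = M) (x : n → 𝕜) : re (star x ⬝ᵥ M *ᵥ x) = ‖toLp 2 (S *ᵥ x)‖ ^ 2 := by
  rw [← hSM, ← hS.eq, ← star_mulVec_dotProduct_mulVec_s19, hS.eq, ← inner_self_eq_norm_sq (𝕜 := 𝕜),
    EuclideanSpace.inner_toLp_toLp, dotProduct_comm]

lemma PosSemidef.norm_star_dotProduct_mulVec_le {A : Matrix n n 𝕜} (hA : A.PosSemidef)
    (x y : n → 𝕜) :
    ‖star x ⬝ᵥ A *ᵥ y‖ ≤ √(re (star x ⬝ᵥ A *ᵥ x)) * √(re (star y ⬝ᵥ A *ᵥ y)) := by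
  let := A.toSeminormedAddCommGroup hA
  let := A.toInnerProductSpace hA
  have hinner (u v : n → 𝕜) : inner 𝕜 u v = star u ⬝ᵥ A *ᵥ v := dotProduct_comm _ _
  have h := norm_inner_le_norm (𝕜 := 𝕜) x y
  rwa [norm_eq_sqrt_re_inner (𝕜 := 𝕜) x, norm_eq_sqrt_re_inner (𝕜 := 𝕜) y, hinner, hinner,
    hinner] at h

lemma re_star_dotProduct_fromBlocks_mulVec (A : Matrix m m 𝕜) (C : Matrix n m 𝕜)
    (D : Matrix n n 𝕜) (x : m → 𝕜) (y : n → 𝕜) :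
    re (star (Sum.elim x y) ⬝ᵥ fromBlocks A Cᴴ C D *ᵥ Sum.elim x y)
      = re (star x ⬝ᵥ A *ᵥ x) + 2 * re (star y ⬝ᵥ C *ᵥ x) + re (star y ⬝ᵥ D *ᵥ y) := by
  have hconj : star x ⬝ᵥ Cᴴ *ᵥ y = star (star y ⬝ᵥ C *ᵥ x) := by
    rw [star_dotProduct, star_mulVec, conjTranspose_conjTranspose, ← dotProduct_mulVec]
  simp only [Function.star_sumElim, fromBlocks_mulVec, sumElim_dotProduct_sumElim,
    Sum.elim_comp_inl, Sum.elim_comp_inr, dotProduct_add, hconj, map_add, RCLike.star_def,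
    RCLike.conj_re]
  ring

lemma PosSemidef.fromBlocks_of_re_nonneg {A : Matrix m m 𝕜} {C : Matrix n m 𝕜}
    {D : Matrix n n 𝕜} (hA : A.IsHermitian) (hD : D.IsHermitian)
    (h : ∀ x y, 0 ≤ re (star x ⬝ᵥ A *ᵥ x) + 2 * re (star y ⬝ᵥ C *ᵥ x) + re (star y ⬝ᵥ D *ᵥ y)) :
    (fromBlocks A Cᴴ C D).PosSemidef := by
  have hT : (fromBlocks A Cᴴ C D).IsHermitian := hA.fromBlocks (conjTranspose_conjTranspose C) hD
  refine .of_dotProduct_mulVec_nonneg hT fun v =>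
    nonneg_iff.2 ⟨?_, hT.im_star_dotProduct_mulVec_self v⟩
  rw [← Sum.elim_comp_inl_inr v, re_star_dotProduct_fromBlocks_mulVec]
  exact h _ _

lemma PosSemidef.neg_sqrt_mul_sqrt_le_re_fromBlocks {A : Matrix m m 𝕜} {C : Matrix n m 𝕜}
    {D : Matrix n n 𝕜} (hT : (fromBlocks A Cᴴ C D).PosSemidef) (x : m → 𝕜) (y : n → 𝕜) :
    -(√(re (star x ⬝ᵥ A *ᵥ x)) * √(re (star y ⬝ᵥ D *ᵥ y))) ≤ re (star y ⬝ᵥ C *ᵥ x) := by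
  have h := hT.norm_star_dotProduct_mulVec_le (Sum.elim 0 y) (Sum.elim x 0)
  simp only [Function.star_sumElim, fromBlocks_mulVec, sumElim_dotProduct_sumElim,
    Sum.elim_comp_inl, Sum.elim_comp_inr, star_zero, zero_dotProduct, mulVec_zero,
    zero_add, add_zero] at h
  rw [mul_comm] at h
  exact neg_le_of_abs_le ((abs_re_le_norm _).trans h)

lemma re_star_dotProduct_ofReal_smul_mulVec (r : ℝ) (M : Matrix n n 𝕜) (y : n → 𝕜) :
    re (star y ⬝ᵥ ((r : 𝕜) • M) *ᵥ y) = r * re (star y ⬝ᵥ M *ᵥ y) := by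
  rw [smul_mulVec, dotProduct_smul, smul_eq_mul, re_ofReal_mul]

lemma re_star_dotProduct_add_smul_one_mulVec [DecidableEq n] (c : ℝ) (M : Matrix n n 𝕜)
    (y : n → 𝕜) :
    re (star y ⬝ᵥ (M + (c : 𝕜) • 1) *ᵥ y) = re (star y ⬝ᵥ M *ᵥ y) + c * ‖toLp 2 y‖ ^ 2 := by
  rw [add_mulVec, dotProduct_add, map_add, re_star_dotProduct_ofReal_smul_mulVec,
    re_star_dotProduct_mulVec_of_mul_self isHermitian_one (mul_one 1) y, one_mulVec]

theorem PosSemidef.fromBlocks_add_perturbation [DecidableEq n] {B : Matrix m m 𝕜}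
    {C Y : Matrix n m 𝕜} {D : Matrix n n 𝕜} {S : Matrix m m 𝕜} {G : Matrix m n 𝕜}
    {R : Matrix n n 𝕜} {c α : ℝ} (hT : (fromBlocks B Cᴴ C D).PosSemidef)
    (hS : S.IsHermitian) (hSB : S * S = B) (hSG : S * G = Yᴴ)
    (hR : R.IsHermitian) (hRunit : IsUnit R) (hRD : R * R = D + (c : 𝕜) • 1) (hc : 0 ≤ c)
    (hα : ‖G * R⁻¹‖ ≤ α) :
    (fromBlocks B (C + Y)ᴴ (C + Y)
      (D + (((α ^ 2 + 2 * α : ℝ) : 𝕜) • (D + (c : 𝕜) • 1) + (c : 𝕜) • 1))).PosSemidef := by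
  obtain ⟨hBh, -, -, hDh⟩ := isHermitian_fromBlocks_iff.1 hT.1
  have hcI : ((c : 𝕜) • (1 : Matrix n n 𝕜)).IsHermitian := isHermitian_one.smul (conj_ofReal c)
  refine .fromBlocks_of_re_nonneg hBh
    (hDh.add (((hDh.add hcI).smul (conj_ofReal _)).add hcI)) fun x y => ?_
  set a := ‖toLp 2 (S *ᵥ x)‖
  set d := ‖toLp 2 (R *ᵥ y)‖
  set e := √(re (star y ⬝ᵥ D *ᵥ y))
  have hqB : re (star x ⬝ᵥ B *ᵥ x) = a ^ 2 := re_star_dotProduct_mulVec_of_mul_self hS hSB x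
  have hqR : d ^ 2 = re (star y ⬝ᵥ D *ᵥ y) + c * ‖toLp 2 y‖ ^ 2 := by
    rw [← re_star_dotProduct_mulVec_of_mul_self hR hRD, re_star_dotProduct_add_smul_one_mulVec]
  have hqDW :
      re (star y ⬝ᵥ (D + (((α ^ 2 + 2 * α : ℝ) : 𝕜) • (D + (c : 𝕜) • 1) + (c : 𝕜) • 1)) *ᵥ y)
        = (1 + α) ^ 2 * d ^ 2 := by
    rw [add_mulVec, dotProduct_add, map_add, re_star_dotProduct_add_smul_one_mulVec,
      re_star_dotProduct_ofReal_smul_mulVec, re_star_dotProduct_mulVec_of_mul_self hR hRD y]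
    linear_combination -hqR
  have hqC : -(a * e) ≤ re (star y ⬝ᵥ C *ᵥ x) := by
    have h := hT.neg_sqrt_mul_sqrt_le_re_fromBlocks x y
    rwa [hqB, Real.sqrt_sq (norm_nonneg _)] at h
  have hGy : ‖toLp 2 (G *ᵥ y)‖ ≤ α * d := calc
    ‖toLp 2 (G *ᵥ y)‖ = ‖toLp 2 ((G * R⁻¹) *ᵥ (R *ᵥ y))‖ := by
      rw [mulVec_mulVec, Matrix.mul_assoc, nonsing_inv_mul _ ((isUnit_iff_isUnit_det R).1 hRunit),
        Matrix.mul_one]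
    _ ≤ ‖G * R⁻¹‖ * d := (G * R⁻¹).l2_opNorm_mulVec (toLp 2 (R *ᵥ y))
    _ ≤ α * d := by gcongr
  have hGS : Gᴴ * S = Y := by
    rw [← hS.eq, ← conjTranspose_mul, hSG, conjTranspose_conjTranspose]
  have hqY : -(α * d * a) ≤ re (star y ⬝ᵥ Y *ᵥ x) := calc
    -(α * d * a) ≤ -(‖toLp 2 (G *ᵥ y)‖ * a) := by gcongr
    _ ≤ re (star (G *ᵥ y) ⬝ᵥ S *ᵥ x) := neg_norm_mul_norm_le_re_star_dotProduct _ _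
    _ = re (star y ⬝ᵥ Y *ᵥ x) := by rw [star_mulVec_dotProduct_mulVec_s19, hGS]
  have hed : e ≤ d := by
    refine Real.sqrt_le_iff.2 ⟨norm_nonneg _, ?_⟩
    rw [hqR]
    exact le_add_of_nonneg_right (by positivity)
  have hα0 : 0 ≤ α := (norm_nonneg _).trans hα
  rw [hqB, hqDW, add_mulVec, dotProduct_add, map_add]
  nlinarith [sq_nonneg (a - e - α * d), mul_nonneg (sub_nonneg.2 hed)
    (by positivity : 0 ≤ d + e + 2 * α * d)]

end Matrix

lemma specNorm_eq_l2_opNorm {p q : ℕ} (M : Matrix (Fin p) (Fin q) ℂ) : specNorm M = ‖M‖ := rfl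

theorem stmt_19_general {k m : ℕ}
    (B : Matrix (Fin k) (Fin k) ℂ) (D : Matrix (Fin m) (Fin m) ℂ)
    (C Y : Matrix (Fin m) (Fin k) ℂ)
    (hT : (Matrix.fromBlocks B Cᴴ C D).PosSemidef)
    (Bsqrt : Matrix (Fin k) (Fin k) ℂ)
    (hBsqrt : Bsqrt.PosSemidef) (hBsqrt2 : Bsqrt * Bsqrt = B)
    (G : Matrix (Fin k) (Fin m) ℂ) (hG : Bsqrt * G = Yᴴ)
    (Dsqrt : Matrix (Fin m) (Fin m) ℂ)
    (hDsqrt : Dsqrt.PosDef)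
    (hDsqrt2 : Dsqrt * Dsqrt = D + ((specNorm Y : ℝ) : ℂ) • (1 : Matrix (Fin m) (Fin m) ℂ))
    (α : ℝ) (hα : α = specNorm (G * Dsqrt⁻¹))
    (W : Matrix (Fin m) (Fin m) ℂ)
    (hW : W = ((α ^ 2 + 2 * α : ℝ) : ℂ) •
        (D + ((specNorm Y : ℝ) : ℂ) • (1 : Matrix (Fin m) (Fin m) ℂ)) +
      ((specNorm Y : ℝ) : ℂ) • (1 : Matrix (Fin m) (Fin m) ℂ)) :
    (Matrix.fromBlocks B (C + Y)ᴴ (C + Y) (D + W)).PosSemidef := by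
  subst hW hα
  simp only [specNorm_eq_l2_opNorm] at hDsqrt2 ⊢
  exact hT.fromBlocks_add_perturbation hBsqrt.isHermitian hBsqrt2 hG hDsqrt.isHermitian
    hDsqrt.isUnit hDsqrt2 (norm_nonneg Y) le_rfl

/-- Lemma 5.6: semidefiniteness-preserving perturbation of the block matrix
`[[B, Cᴴ], [C, D]]`. -/
theorem stmt_19 {k m : ℕ}
    (B : Matrix (Fin k) (Fin k) ℂ) (D : Matrix (Fin m) (Fin m) ℂ)
    (C Y : Matrix (Fin m) (Fin k) ℂ)
    (hB : B.PosSemidef) (hD : D.PosSemidef)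
    (hT : (Matrix.fromBlocks B Cᴴ C D).PosSemidef)
    (hY : Y ≠ 0)
    (hYrange : LinearMap.range (Matrix.mulVecLin Yᴴ) ≤ LinearMap.range (Matrix.mulVecLin B))
    (Bsqrt : Matrix (Fin k) (Fin k) ℂ)
    (hBsqrt : Bsqrt.PosSemidef) (hBsqrt2 : Bsqrt * Bsqrt = B)
    (G : Matrix (Fin k) (Fin m) ℂ) (hG : Bsqrt * G = Yᴴ)
    (Dsqrt : Matrix (Fin m) (Fin m) ℂ)
    (hDsqrt : Dsqrt.PosDef)
    (hDsqrt2 : Dsqrt * Dsqrt = D + ((specNorm Y : ℝ) : ℂ) • (1 : Matrix (Fin m) (Fin m) ℂ))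
    (α : ℝ) (hα : α = specNorm (G * Dsqrt⁻¹))
    (W : Matrix (Fin m) (Fin m) ℂ)
    (hW : W = ((α ^ 2 + 2 * α : ℝ) : ℂ) •
        (D + ((specNorm Y : ℝ) : ℂ) • (1 : Matrix (Fin m) (Fin m) ℂ)) +
      ((specNorm Y : ℝ) : ℂ) • (1 : Matrix (Fin m) (Fin m) ℂ)) :
    (Matrix.fromBlocks B (C + Y)ᴴ (C + Y) (D + W)).PosSemidef :=
  stmt_19_general B D C Y hT Bsqrt hBsqrt hBsqrt2 G hG Dsqrt hDsqrt hDsqrt2 α hα W hW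
end
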